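/- arXiv:1611.03439 — 7 statements merged into one kernel-verified Lean document; each statement's English description precedes it below -/
import Mathlib

section
/- Let m ≥ 2, and let G = (g_{ij}) be an m×m matrix with 0 ≤ g_{ij} ≤ 1, g_{ii} = 0, and ∑_{j=1}^m g_{ij} = 1 for each i. Let α_1,...,α_m ≥ 0, let n_1,...,n_m be positive integers, and let |T_i| be integers with 0 ≤ |T_i| ≤ n_i. Define α*_1 = α_1 + ∑_{l=2}^m (1 - |T_l|/n_l) g_{l1} α_l and recursively α*_i = α_i + ∑_{j=1}^{i-1} (1 - |T_j|/n_j) g_{ji} α*_j + ∑_{l=i+1}^m (1 - |T_l|/n_l) g_{li} α_l for i = 2,...,m. Then ∑_{i=1}^m (|T_i|/n_i) α*_i ≤ ∑_{i=1}^m α_i. -/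
/-!
Write `t i = |T_i| / n_i ≤ 1`. Summing the recursion for `α*` over `i` gives
`∑ t_i α*_i = ∑ α_i + (inflow - ∑ (1 - t_i) α*_i)`, where the inflow is the mass
`(1 - t_j) g_{ji} α*_j` or `(1 - t_l) g_{li} α_l` passed along the edges of `G`.
Since `α_l ≤ α*_l`, every node `j` sends out at most `(1 - t_j) α*_j ∑_i g_{ji} ≤ (1 - t_j) α*_j`,
so the bracket is nonpositive.
-/

open Finset

lemma sum_Icc_sum_Icc_pred_comm {M : Type*} [AddCommMonoid M] (m : ℕ) (f : ℕ → ℕ → M) :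
    ∑ i ∈ Icc 1 m, ∑ j ∈ Icc 1 (i - 1), f j i = ∑ j ∈ Icc 1 m, ∑ i ∈ Icc (j + 1) m, f j i :=
  sum_comm' fun i j => by simp only [mem_Icc]; omega

lemma sum_Icc_pred_add_sum_Icc_succ_le {M : Type*} [AddCommMonoid M] [PartialOrder M]
    [IsOrderedAddMonoid M] {f : ℕ → M} (hf : ∀ i, 0 ≤ f i) {j m : ℕ} (hj : j ≤ m) :
    ∑ i ∈ Icc 1 (j - 1), f i + ∑ i ∈ Icc (j + 1) m, f i ≤ ∑ i ∈ Icc 1 m, f i := by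
  have hdisj : Disjoint (Icc 1 (j - 1)) (Icc (j + 1) m) :=
    disjoint_left.mpr fun i hi hi' => by simp only [mem_Icc] at hi hi'; omega
  rw [← sum_union hdisj]
  refine sum_le_sum_of_subset_of_nonneg (fun i hi => ?_) fun i _ _ => hf i
  simp only [mem_union, mem_Icc] at hi ⊢
  omega

section GatekeepingRecursion

variable {m : ℕ} {g : ℕ → ℕ → ℝ} {t a b : ℕ → ℝ}

lemma le_of_gatekeeping_recursion (hg : ∀ i j, 0 ≤ g i j) (ht : ∀ i, t i ≤ 1)
    (ha : ∀ i, 0 ≤ a i)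
    (hb : ∀ i ∈ Icc 1 m, b i = a i + ∑ j ∈ Icc 1 (i - 1), (1 - t j) * g j i * b j
      + ∑ l ∈ Icc (i + 1) m, (1 - t l) * g l i * a l) :
    ∀ i ∈ Icc 1 m, a i ≤ b i := by
  intro i
  induction i using Nat.strong_induction_on with
  | _ i ih =>
    intro hi
    have hweight : ∀ j, 0 ≤ (1 - t j) * g j i := fun j =>
      mul_nonneg (sub_nonneg.mpr (ht j)) (hg j i)
    have hearlier : 0 ≤ ∑ j ∈ Icc 1 (i - 1), (1 - t j) * g j i * b j := by
      refine sum_nonneg fun j hj => mul_nonneg (hweight j) ?_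
      simp only [mem_Icc] at hi hj
      exact (ha j).trans (ih j (by omega) (mem_Icc.mpr ⟨hj.1, by omega⟩))
    have hlater : 0 ≤ ∑ l ∈ Icc (i + 1) m, (1 - t l) * g l i * a l :=
      sum_nonneg fun l _ => mul_nonneg (hweight l) (ha l)
    rw [hb i hi]
    linarith

lemma sum_gatekeeping_inflow_le (hg : ∀ i j, 0 ≤ g i j)
    (hrow : ∀ j ∈ Icc 1 m, ∑ i ∈ Icc 1 m, g j i ≤ 1) (ht : ∀ i, t i ≤ 1)
    (hab : ∀ i ∈ Icc 1 m, a i ≤ b i) (ha : ∀ i, 0 ≤ a i) :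
    ∑ i ∈ Icc 1 m, (∑ j ∈ Icc 1 (i - 1), (1 - t j) * g j i * b j
        + ∑ l ∈ Icc (i + 1) m, (1 - t l) * g l i * a l)
      ≤ ∑ j ∈ Icc 1 m, (1 - t j) * b j := by
  rw [sum_add_distrib, sum_Icc_sum_Icc_pred_comm,
    ← sum_Icc_sum_Icc_pred_comm m fun i l => (1 - t l) * g l i * a l, ← sum_add_distrib]
  refine sum_le_sum fun j hj => ?_
  have hjm := (mem_Icc.mp hj).2
  have hw : 0 ≤ 1 - t j := sub_nonneg.mpr (ht j)
  have hbj : 0 ≤ b j := (ha j).trans (hab j hj)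
  calc ∑ i ∈ Icc (j + 1) m, (1 - t j) * g j i * b j + ∑ i ∈ Icc 1 (j - 1), (1 - t j) * g j i * a j
      ≤ ∑ i ∈ Icc (j + 1) m, (1 - t j) * g j i * b j
        + ∑ i ∈ Icc 1 (j - 1), (1 - t j) * g j i * b j := by
        gcongr with i
        · exact mul_nonneg hw (hg j i)
        · exact hab j hj
    _ = (1 - t j) * b j * (∑ i ∈ Icc 1 (j - 1), g j i + ∑ i ∈ Icc (j + 1) m, g j i) := by
        simp only [mul_add, mul_sum]
        rw [add_comm]
        congr 1 <;> exact sum_congr rfl fun i _ => by ring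
    _ ≤ (1 - t j) * b j * 1 := by
        gcongr
        exact (sum_Icc_pred_add_sum_Icc_succ_le (hg j) hjm).trans (hrow j hj)
    _ = (1 - t j) * b j := mul_one _

theorem sum_mul_le_sum_of_gatekeeping_recursion (hg : ∀ i j, 0 ≤ g i j)
    (hrow : ∀ j ∈ Icc 1 m, ∑ i ∈ Icc 1 m, g j i ≤ 1) (ht : ∀ i, t i ≤ 1)
    (ha : ∀ i, 0 ≤ a i)
    (hb : ∀ i ∈ Icc 1 m, b i = a i + ∑ j ∈ Icc 1 (i - 1), (1 - t j) * g j i * b j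
      + ∑ l ∈ Icc (i + 1) m, (1 - t l) * g l i * a l) :
    ∑ i ∈ Icc 1 m, t i * b i ≤ ∑ i ∈ Icc 1 m, a i := by
  have hinflow := sum_gatekeeping_inflow_le hg hrow ht
    (le_of_gatekeeping_recursion hg ht ha hb) ha
  have hsplit : ∑ i ∈ Icc 1 m, t i * b i = ∑ i ∈ Icc 1 m, a i
      + (∑ i ∈ Icc 1 m, (∑ j ∈ Icc 1 (i - 1), (1 - t j) * g j i * b j
          + ∑ l ∈ Icc (i + 1) m, (1 - t l) * g l i * a l)
        - ∑ i ∈ Icc 1 m, (1 - t i) * b i) := by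
    rw [← sum_sub_distrib, ← sum_add_distrib]
    exact sum_congr rfl fun i hi => by linear_combination hb i hi
  linarith

end GatekeepingRecursion

theorem bonferroni_gatekeeping_key_inequality_general
    (m : ℕ)
    (g : ℕ → ℕ → ℝ) (a astar : ℕ → ℝ) (n T : ℕ → ℕ)
    (hg0 : ∀ i j, 0 ≤ g i j)
    (hgrow : ∀ i ∈ Finset.Icc 1 m, ∑ j ∈ Finset.Icc 1 m, g i j = 1)
    (ha : ∀ i, 0 ≤ a i) (hT : ∀ i, T i ≤ n i)
    (hstar : ∀ i ∈ Finset.Icc 1 m,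
      astar i = a i
        + ∑ j ∈ Finset.Icc 1 (i - 1), (1 - (T j : ℝ) / n j) * g j i * astar j
        + ∑ l ∈ Finset.Icc (i + 1) m, (1 - (T l : ℝ) / n l) * g l i * a l) :
    ∑ i ∈ Finset.Icc 1 m, ((T i : ℝ) / n i) * astar i
      ≤ ∑ i ∈ Finset.Icc 1 m, a i := by
  have hfrac : ∀ i, (T i : ℝ) / n i ≤ 1 := fun i =>
    div_le_one_of_le₀ (by exact_mod_cast hT i) (Nat.cast_nonneg _)
  exact sum_mul_le_sum_of_gatekeeping_recursion hg0 (fun j hj => (hgrow j hj).le) hfrac ha hstar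

/-- Key inequality of Theorem 1: the true-null-weighted sum of worst-case
local levels `α*_i` is bounded by the total level `∑ α_i`. -/
theorem bonferroni_gatekeeping_key_inequality
    (m : ℕ) (hm : 2 ≤ m)
    (g : ℕ → ℕ → ℝ) (a astar : ℕ → ℝ) (n T : ℕ → ℕ)
    (hg0 : ∀ i j, 0 ≤ g i j) (hg1 : ∀ i j, g i j ≤ 1)
    (hgdiag : ∀ i, g i i = 0)
    (hgrow : ∀ i ∈ Finset.Icc 1 m, ∑ j ∈ Finset.Icc 1 m, g i j = 1)
    (ha : ∀ i, 0 ≤ a i) (hn : ∀ i, 0 < n i) (hT : ∀ i, T i ≤ n i)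
    (hstar : ∀ i ∈ Finset.Icc 1 m,
      astar i = a i
        + ∑ j ∈ Finset.Icc 1 (i - 1), (1 - (T j : ℝ) / n j) * g j i * astar j
        + ∑ l ∈ Finset.Icc (i + 1) m, (1 - (T l : ℝ) / n l) * g l i * a l) :
    ∑ i ∈ Finset.Icc 1 m, ((T i : ℝ) / n i) * astar i
      ≤ ∑ i ∈ Finset.Icc 1 m, a i :=
  bonferroni_gatekeeping_key_inequality_general m g a astar n T hg0 hgrow ha hT hstar
end

section
/- With the notation of the previous context (α*_i defined recursively from α_i, g_{ij}, |T_i|/n_i), define for 1 ≤ j ≤ m−1: f(j) = ∑_{i=1}^{j} [ |T_i|/n_i + (1 − |T_i|/n_i)(∑_{l=j+1}^m g_{il}) ] α*_i + ∑_{l=j+1}^{m} [ |T_l|/n_l + (1 − |T_l|/n_l)(∑_{i=j+1}^m g_{li}) ] α_l. Then f(j) ≤ f(j−1) for every j with 2 ≤ j ≤ m−1; i.e., f is non-increasing. -/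
/-!
With `c i = |T_i|/n_i` and `s = ∑_{l>j} g_{jl} ≤ 1`, moving from `f(j-1)` to `f(j)` trades the
terms in which `j` receives weight from another index for `α*_j`, whose recursion consists of
exactly those terms plus `α_j`. Since `g_{jj} = 0` this gives
`f(j-1) - f(j) = (1 - c_j)(1 - s) (∑_{i<j} (1 - c_i) g_{ij} α*_i + ∑_{l>j} (1 - c_l) g_{lj} α_l)`,
a product of non-negative factors; `α*_i ≥ 0` follows by strong induction from its recursion.
-/

open Finset

namespace BonferroniGatekeeping

/-- The paper's `f(j)`, with `c i` standing for `|T_i|/n_i`. -/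
def bound (m : ℕ) (g : ℕ → ℕ → ℝ) (c a astar : ℕ → ℝ) (j : ℕ) : ℝ :=
  (∑ i ∈ Icc 1 j, (c i + (1 - c i) * ∑ l ∈ Icc (j + 1) m, g i l) * astar i)
    + ∑ l ∈ Icc (j + 1) m, (c l + (1 - c l) * ∑ i ∈ Icc (j + 1) m, g l i) * a l

lemma sum_Icc_eq_add_sum_Icc_add_one {M : Type*} [AddCommMonoid M] {k m : ℕ} (h : k ≤ m)
    (F : ℕ → M) :
    ∑ l ∈ Icc k m, F l = F k + ∑ l ∈ Icc (k + 1) m, F l := by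
  rw [← insert_Icc_add_one_left_eq_Icc h, sum_insert (by simp)]

lemma nonneg_of_recursion {m : ℕ} {g : ℕ → ℕ → ℝ} {w a x : ℕ → ℝ}
    (hw : ∀ i, 0 ≤ w i) (hg : ∀ i j, 0 ≤ g i j) (ha : ∀ i, 0 ≤ a i)
    (hx : ∀ i ∈ Icc 1 m, x i = a i + ∑ j ∈ Icc 1 (i - 1), w j * g j i * x j
      + ∑ l ∈ Icc (i + 1) m, w l * g l i * a l) :
    ∀ i ∈ Icc 1 m, 0 ≤ x i := by
  intro i
  induction i using Nat.strong_induction_on with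
  | _ i ih =>
    intro hi
    have hi' := mem_Icc.mp hi
    rw [hx i hi]
    have hearlier : 0 ≤ ∑ j ∈ Icc 1 (i - 1), w j * g j i * x j :=
      sum_nonneg fun j hj => by
        have hj' := mem_Icc.mp hj
        exact mul_nonneg (mul_nonneg (hw j) (hg j i))
          (ih j (by omega) (mem_Icc.mpr ⟨hj'.1, by omega⟩))
    have hlater : 0 ≤ ∑ l ∈ Icc (i + 1) m, w l * g l i * a l :=
      sum_nonneg fun l _ => mul_nonneg (mul_nonneg (hw l) (hg l i)) (ha l)
    linarith [ha i]

lemma bound_sub_bound_add_one {m k : ℕ} (hk : k + 1 ≤ m) {g : ℕ → ℕ → ℝ} {c a astar : ℕ → ℝ}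
    (hdiag : g (k + 1) (k + 1) = 0)
    (hstar : astar (k + 1) = a (k + 1)
      + ∑ i ∈ Icc 1 k, (1 - c i) * g i (k + 1) * astar i
      + ∑ l ∈ Icc (k + 2) m, (1 - c l) * g l (k + 1) * a l) :
    bound m g c a astar k - bound m g c a astar (k + 1)
      = (1 - c (k + 1)) * (1 - ∑ l ∈ Icc (k + 2) m, g (k + 1) l)
        * (∑ i ∈ Icc 1 k, (1 - c i) * g i (k + 1) * astar i
          + ∑ l ∈ Icc (k + 2) m, (1 - c l) * g l (k + 1) * a l) := by
  have split : ∀ F : ℕ → ℝ, ∑ l ∈ Icc (k + 1) m, F l = F (k + 1) + ∑ l ∈ Icc (k + 2) m, F l :=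
    sum_Icc_eq_add_sum_Icc_add_one hk
  have hsplit_row : ∀ (S : Finset ℕ) (x : ℕ → ℝ),
      ∑ i ∈ S, (c i + (1 - c i) * ∑ l ∈ Icc (k + 1) m, g i l) * x i
        = ∑ i ∈ S, (c i + (1 - c i) * ∑ l ∈ Icc (k + 2) m, g i l) * x i
          + ∑ i ∈ S, (1 - c i) * g i (k + 1) * x i := fun S x => by
    rw [← sum_add_distrib]
    refine sum_congr rfl fun i _ => ?_
    rw [split]
    ring
  unfold bound
  rw [show k + 1 + 1 = k + 2 from rfl, sum_Icc_succ_top (Nat.le_add_left 1 k),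
    split fun l => (c l + (1 - c l) * ∑ i ∈ Icc (k + 1) m, g l i) * a l, hsplit_row, hsplit_row,
    split (g (k + 1)), hdiag, hstar]
  ring

end BonferroniGatekeeping

open BonferroniGatekeeping in
theorem bonferroni_gatekeeping_lemma1_general
    (m : ℕ)
    (g : ℕ → ℕ → ℝ) (a astar : ℕ → ℝ) (n T : ℕ → ℕ) (f : ℕ → ℝ)
    (hg0 : ∀ i j, 0 ≤ g i j)
    (hgdiag : ∀ i, g i i = 0)
    (hgrow : ∀ i ∈ Finset.Icc 1 m, ∑ j ∈ Finset.Icc 1 m, g i j = 1)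
    (ha : ∀ i, 0 ≤ a i) (hT : ∀ i, T i ≤ n i)
    (hstar : ∀ i ∈ Finset.Icc 1 m,
      astar i = a i
        + ∑ j ∈ Finset.Icc 1 (i - 1), (1 - (T j : ℝ) / n j) * g j i * astar j
        + ∑ l ∈ Finset.Icc (i + 1) m, (1 - (T l : ℝ) / n l) * g l i * a l)
    (hf : ∀ j, f j =
      (∑ i ∈ Finset.Icc 1 j,
        ((T i : ℝ) / n i
          + (1 - (T i : ℝ) / n i) * ∑ l ∈ Finset.Icc (j + 1) m, g i l) * astar i)
      + ∑ l ∈ Finset.Icc (j + 1) m,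
        ((T l : ℝ) / n l
          + (1 - (T l : ℝ) / n l) * ∑ i ∈ Finset.Icc (j + 1) m, g l i) * a l) :
    ∀ j, 2 ≤ j → j ≤ m - 1 → f j ≤ f (j - 1) := by
  intro j hj2 hjm
  obtain ⟨k, rfl⟩ : ∃ k, j = k + 1 := ⟨j - 1, by omega⟩
  set c : ℕ → ℝ := fun i => (T i : ℝ) / n i
  have hf' : f = bound m g c a astar := funext hf
  have hc : ∀ i, 0 ≤ 1 - c i := fun i =>
    sub_nonneg.mpr (div_le_one_of_le₀ (by exact_mod_cast hT i) (Nat.cast_nonneg _))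
  have hkm : k + 1 ∈ Icc 1 m := mem_Icc.mpr ⟨by omega, by omega⟩
  have hastar := nonneg_of_recursion hc hg0 ha hstar
  have hrow : ∑ l ∈ Icc (k + 2) m, g (k + 1) l ≤ 1 :=
    hgrow (k + 1) hkm ▸ sum_le_sum_of_subset_of_nonneg
      (Icc_subset_Icc (by omega) le_rfl) fun l _ _ => hg0 (k + 1) l
  have hA : 0 ≤ ∑ i ∈ Icc 1 k, (1 - c i) * g i (k + 1) * astar i :=
    sum_nonneg fun i hi => mul_nonneg (mul_nonneg (hc i) (hg0 i (k + 1)))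
      (hastar i (Icc_subset_Icc le_rfl (by omega) hi))
  have hB : 0 ≤ ∑ l ∈ Icc (k + 2) m, (1 - c l) * g l (k + 1) * a l :=
    sum_nonneg fun l _ => mul_nonneg (mul_nonneg (hc l) (hg0 l (k + 1))) (ha l)
  rw [hf', Nat.add_sub_cancel, ← sub_nonneg,
    bound_sub_bound_add_one (by omega) (hgdiag (k + 1)) (hstar (k + 1) hkm)]
  exact mul_nonneg (mul_nonneg (hc (k + 1)) (sub_nonneg.mpr hrow)) (add_nonneg hA hB)

/-- Lemma 1 of the paper: the function `f` is non-increasing on `{2, …, m-1}`. -/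
theorem bonferroni_gatekeeping_lemma1
    (m : ℕ) (hm : 3 ≤ m)
    (g : ℕ → ℕ → ℝ) (a astar : ℕ → ℝ) (n T : ℕ → ℕ) (f : ℕ → ℝ)
    (hg0 : ∀ i j, 0 ≤ g i j) (hg1 : ∀ i j, g i j ≤ 1)
    (hgdiag : ∀ i, g i i = 0)
    (hgrow : ∀ i ∈ Finset.Icc 1 m, ∑ j ∈ Finset.Icc 1 m, g i j = 1)
    (ha : ∀ i, 0 ≤ a i) (hn : ∀ i, 0 < n i) (hT : ∀ i, T i ≤ n i)
    (hstar : ∀ i ∈ Finset.Icc 1 m,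
      astar i = a i
        + ∑ j ∈ Finset.Icc 1 (i - 1), (1 - (T j : ℝ) / n j) * g j i * astar j
        + ∑ l ∈ Finset.Icc (i + 1) m, (1 - (T l : ℝ) / n l) * g l i * a l)
    (hf : ∀ j, f j =
      (∑ i ∈ Finset.Icc 1 j,
        ((T i : ℝ) / n i
          + (1 - (T i : ℝ) / n i) * ∑ l ∈ Finset.Icc (j + 1) m, g i l) * astar i)
      + ∑ l ∈ Finset.Icc (j + 1) m,
        ((T l : ℝ) / n l
          + (1 - (T l : ℝ) / n l) * ∑ i ∈ Finset.Icc (j + 1) m, g l i) * a l) :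
    ∀ j, 2 ≤ j → j ≤ m - 1 → f j ≤ f (j - 1) :=
  bonferroni_gatekeeping_lemma1_general m g a astar n T f hg0 hgdiag hgrow ha hT hstar hf
end

section
/- Let m_1, m_2 ≥ 1 and let g_{1j2l}, g_{2l1j} ∈ [0,1] satisfy ∑_{l=1}^{m_2} g_{1j2l} = 1 for each j and ∑_{j=1}^{m_1} g_{2l1j} = 1 for each l. Let α_{1j}, α_{2l} ≥ 0 with ∑_j α_{1j} + ∑_l α_{2l} = α, let n_{1j}, n_{2l} be positive integers, and let 0 ≤ |T_{1j}| ≤ n_{1j}, 0 ≤ |T_{2l}| ≤ n_{2l}. Define α*_{1j} = α_{1j} + ∑_{l=1}^{m_2} (1 − |T_{2l}|/n_{2l}) g_{2l1j} α_{2l} and α*_{2l} = α_{2l} + ∑_{j=1}^{m_1} (1 − |T_{1j}|/n_{1j}) g_{1j2l} α*_{1j}. Then ∑_{j=1}^{m_1} (|T_{1j}|/n_{1j}) α*_{1j} + ∑_{l=1}^{m_2} (|T_{2l}|/n_{2l}) α*_{2l} ≤ α. -/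
/-!
Write `t = |T| / n ∈ [0, 1]`. A family passes the unspent part `(1 - t)` of its level to the
other layer along a row of `g` summing to one, so passing on conserves mass: the first-layer
levels total `∑ α₁ + ∑ (1 - t₂) α₂`, and since `t₂ ≤ 1` the true-null share of the second
layer is at most `∑ t₂ α₂ + ∑ (1 - t₁) α*₁`. Adding up, the `t`- and `(1 - t)`-parts of `α*₁`
and of `α₂` recombine, leaving `∑ α₁ + ∑ α₂ = α`.
-/

open Finset

section Redistribution

variable {ι κ : Type*} {s : Finset ι} {t : Finset κ} {g : ι → κ → ℝ}

theorem sum_sum_mul_mul_eq_of_sum_eq_one (hrow : ∀ i ∈ s, ∑ k ∈ t, g i k = 1) (c b : ι → ℝ) :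
    ∑ k ∈ t, ∑ i ∈ s, c i * g i k * b i = ∑ i ∈ s, c i * b i := by
  rw [sum_comm]
  refine sum_congr rfl fun i hi => ?_
  rw [← sum_mul, ← mul_sum, hrow i hi, mul_one]

theorem sum_mul_add_sum_one_sub_mul (u : Finset ι) (θ x : ι → ℝ) :
    ∑ i ∈ u, θ i * x i + ∑ i ∈ u, (1 - θ i) * x i = ∑ i ∈ u, x i := by
  rw [← sum_add_distrib]
  exact sum_congr rfl fun i _ => by ring

variable {τ b : ι → ℝ} {a a' : κ → ℝ}

theorem sum_eq_add_of_eq_add_sum (hrow : ∀ i ∈ s, ∑ k ∈ t, g i k = 1)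
    (ha' : ∀ k ∈ t, a' k = a k + ∑ i ∈ s, (1 - τ i) * g i k * b i) :
    ∑ k ∈ t, a' k = ∑ k ∈ t, a k + ∑ i ∈ s, (1 - τ i) * b i := by
  rw [sum_congr rfl ha', sum_add_distrib, sum_sum_mul_mul_eq_of_sum_eq_one hrow]

theorem sum_mul_le_add_of_eq_add_sum (hg : ∀ i ∈ s, ∀ k ∈ t, 0 ≤ g i k)
    (hrow : ∀ i ∈ s, ∑ k ∈ t, g i k = 1) (hτ : ∀ i ∈ s, τ i ≤ 1) (hb : ∀ i ∈ s, 0 ≤ b i)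
    {θ : κ → ℝ} (hθ : ∀ k ∈ t, θ k ≤ 1)
    (ha' : ∀ k ∈ t, a' k = a k + ∑ i ∈ s, (1 - τ i) * g i k * b i) :
    ∑ k ∈ t, θ k * a' k ≤ ∑ k ∈ t, θ k * a k + ∑ i ∈ s, (1 - τ i) * b i := by
  have hinflow : ∀ k ∈ t, 0 ≤ ∑ i ∈ s, (1 - τ i) * g i k * b i := fun k hk =>
    sum_nonneg fun i hi =>
      mul_nonneg (mul_nonneg (sub_nonneg.2 (hτ i hi)) (hg i hi k hk)) (hb i hi)
  calc ∑ k ∈ t, θ k * a' k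
      = ∑ k ∈ t, θ k * a k + ∑ k ∈ t, θ k * ∑ i ∈ s, (1 - τ i) * g i k * b i := by
        rw [← sum_add_distrib]
        exact sum_congr rfl fun k hk => by rw [ha' k hk, mul_add]
    _ ≤ ∑ k ∈ t, θ k * a k + ∑ k ∈ t, ∑ i ∈ s, (1 - τ i) * g i k * b i := by
        gcongr with k hk
        exact mul_le_of_le_one_left (hinflow k hk) (hθ k hk)
    _ = ∑ k ∈ t, θ k * a k + ∑ i ∈ s, (1 - τ i) * b i := by
        rw [sum_sum_mul_mul_eq_of_sum_eq_one hrow]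

end Redistribution

theorem natCast_div_le_one_of_le {T n : ℕ} (h : T ≤ n) : (T : ℝ) / n ≤ 1 :=
  div_le_one_of_le₀ (by exact_mod_cast h) n.cast_nonneg

theorem two_layer_gatekeeping_key_inequality_general
    (m1 m2 : ℕ) (α : ℝ)
    (g12 g21 : ℕ → ℕ → ℝ)
    (a1 a2 astar1 astar2 : ℕ → ℝ) (n1 n2 T1 T2 : ℕ → ℕ)
    (hg12 : ∀ j l, 0 ≤ g12 j l ∧ g12 j l ≤ 1)
    (hg21 : ∀ l j, 0 ≤ g21 l j ∧ g21 l j ≤ 1)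
    (hg12row : ∀ j ∈ Finset.Icc 1 m1, ∑ l ∈ Finset.Icc 1 m2, g12 j l = 1)
    (hg21row : ∀ l ∈ Finset.Icc 1 m2, ∑ j ∈ Finset.Icc 1 m1, g21 l j = 1)
    (ha1 : ∀ j, 0 ≤ a1 j) (ha2 : ∀ l, 0 ≤ a2 l)
    (hT1 : ∀ j, T1 j ≤ n1 j) (hT2 : ∀ l, T2 l ≤ n2 l)
    (hα : (∑ j ∈ Finset.Icc 1 m1, a1 j) + ∑ l ∈ Finset.Icc 1 m2, a2 l = α)
    (hstar1 : ∀ j ∈ Finset.Icc 1 m1,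
      astar1 j = a1 j
        + ∑ l ∈ Finset.Icc 1 m2, (1 - (T2 l : ℝ) / n2 l) * g21 l j * a2 l)
    (hstar2 : ∀ l ∈ Finset.Icc 1 m2,
      astar2 l = a2 l
        + ∑ j ∈ Finset.Icc 1 m1, (1 - (T1 j : ℝ) / n1 j) * g12 j l * astar1 j) :
    (∑ j ∈ Finset.Icc 1 m1, ((T1 j : ℝ) / n1 j) * astar1 j)
      + (∑ l ∈ Finset.Icc 1 m2, ((T2 l : ℝ) / n2 l) * astar2 l) ≤ α := by
  have ht1 : ∀ j, (T1 j : ℝ) / n1 j ≤ 1 := fun j => natCast_div_le_one_of_le (hT1 j)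
  have ht2 : ∀ l, (T2 l : ℝ) / n2 l ≤ 1 := fun l => natCast_div_le_one_of_le (hT2 l)
  have hastar1 : ∀ j ∈ Icc 1 m1, 0 ≤ astar1 j := fun j hj => by
    rw [hstar1 j hj]
    exact add_nonneg (ha1 j) <| sum_nonneg fun l _ =>
      mul_nonneg (mul_nonneg (sub_nonneg.2 (ht2 l)) (hg21 l j).1) (ha2 l)
  have hlayer1 := sum_eq_add_of_eq_add_sum hg21row hstar1
  have hlayer2 := sum_mul_le_add_of_eq_add_sum (fun j _ l _ => (hg12 j l).1) hg12row
    (fun j _ => ht1 j) hastar1 (fun l _ => ht2 l) hstar2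
  have hsplit1 := sum_mul_add_sum_one_sub_mul (Icc 1 m1) (fun j => (T1 j : ℝ) / n1 j) astar1
  have hsplit2 := sum_mul_add_sum_one_sub_mul (Icc 1 m2) (fun l => (T2 l : ℝ) / n2 l) a2
  linarith

/-- Key inequality of Theorem 2 (two-layer Bonferroni gatekeeping):
the true-null-weighted sum of worst-case local levels for the two layers
is bounded by the total level `α`. -/
theorem two_layer_gatekeeping_key_inequality
    (m1 m2 : ℕ) (hm1 : 1 ≤ m1) (hm2 : 1 ≤ m2) (α : ℝ)
    (g12 g21 : ℕ → ℕ → ℝ)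
    (a1 a2 astar1 astar2 : ℕ → ℝ) (n1 n2 T1 T2 : ℕ → ℕ)
    (hg12 : ∀ j l, 0 ≤ g12 j l ∧ g12 j l ≤ 1)
    (hg21 : ∀ l j, 0 ≤ g21 l j ∧ g21 l j ≤ 1)
    (hg12row : ∀ j ∈ Finset.Icc 1 m1, ∑ l ∈ Finset.Icc 1 m2, g12 j l = 1)
    (hg21row : ∀ l ∈ Finset.Icc 1 m2, ∑ j ∈ Finset.Icc 1 m1, g21 l j = 1)
    (ha1 : ∀ j, 0 ≤ a1 j) (ha2 : ∀ l, 0 ≤ a2 l)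
    (hn1 : ∀ j, 0 < n1 j) (hn2 : ∀ l, 0 < n2 l)
    (hT1 : ∀ j, T1 j ≤ n1 j) (hT2 : ∀ l, T2 l ≤ n2 l)
    (hα : (∑ j ∈ Finset.Icc 1 m1, a1 j) + ∑ l ∈ Finset.Icc 1 m2, a2 l = α)
    (hstar1 : ∀ j ∈ Finset.Icc 1 m1,
      astar1 j = a1 j
        + ∑ l ∈ Finset.Icc 1 m2, (1 - (T2 l : ℝ) / n2 l) * g21 l j * a2 l)
    (hstar2 : ∀ l ∈ Finset.Icc 1 m2,
      astar2 l = a2 l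
        + ∑ j ∈ Finset.Icc 1 m1, (1 - (T1 j : ℝ) / n1 j) * g12 j l * astar1 j) :
    (∑ j ∈ Finset.Icc 1 m1, ((T1 j : ℝ) / n1 j) * astar1 j)
      + (∑ l ∈ Finset.Icc 1 m2, ((T2 l : ℝ) / n2 l) * astar2 l) ≤ α :=
  two_layer_gatekeeping_key_inequality_general m1 m2 α g12 g21 a1 a2 astar1 astar2 n1 n2 T1 T2 hg12
    hg21 hg12row hg21row ha1 ha2 hT1 hT2 hα hstar1 hstar2
end

section
/- Fixed-point bound for the two-family algorithm: with α_1, α_2 ≥ 0, suppose no true null is rejected at stage k in either family, so that |R_{1(k)}| ≤ n_1 − |T_1| and |R_{2(k−1)}| ≤ |R_{2(k)}| ≤ n_2 − |T_2|. Then α_{1(k)} ≤ α*_1 := α_1 + (1 − |T_2|/n_2) α_2 and α_{2(k)} ≤ α*_2 := α_2 + (1 − |T_1|/n_1) α*_1, and furthermore (|T_1|/n_1) α*_1 + (|T_2|/n_2) α*_2 ≤ α_1 + α_2. -/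
/-- Fixed-point bound for the two-family algorithm: on the event that no true
null is rejected at stage `k`, the updated levels are dominated by the
worst-case levels `α*_1, α*_2`, and the key inequality holds. -/
theorem two_family_fixed_point_bound
    (a1 a2 : ℝ) (ha1 : 0 ≤ a1) (ha2 : 0 ≤ a2)
    (n1 n2 T1 T2 : ℕ) (hn1 : 0 < n1) (hn2 : 0 < n2)
    (hT1 : T1 ≤ n1) (hT2 : T2 ≤ n2)
    (R1 R2 : ℕ → ℕ) (k : ℕ) (hk : 2 ≤ k)
    (hR1k : (R1 k : ℝ) ≤ (n1 : ℝ) - T1)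
    (hR2mono : (R2 (k - 1) : ℝ) ≤ (R2 k : ℝ))
    (hR2k : (R2 k : ℝ) ≤ (n2 : ℝ) - T2)
    (A1 A2 : ℕ → ℝ)
    (hA1 : A1 k = a1 + ((R2 (k - 1) : ℝ) / n2) * a2)
    (hA2 : A2 k = a2 + ((R1 k : ℝ) / n1) * A1 k) :
    A1 k ≤ a1 + (1 - (T2 : ℝ) / n2) * a2
    ∧ A2 k ≤ a2 + (1 - (T1 : ℝ) / n1) * (a1 + (1 - (T2 : ℝ) / n2) * a2)
    ∧ ((T1 : ℝ) / n1) * (a1 + (1 - (T2 : ℝ) / n2) * a2)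
        + ((T2 : ℝ) / n2)
          * (a2 + (1 - (T1 : ℝ) / n1) * (a1 + (1 - (T2 : ℝ) / n2) * a2))
      ≤ a1 + a2 := by
  have hn1' : (0:ℝ) < n1 := by exact_mod_cast hn1
  have hn2' : (0:ℝ) < n2 := by exact_mod_cast hn2
  have hR1nn : (0:ℝ) ≤ (R1 k : ℝ) := Nat.cast_nonneg _
  have hR2nn : (0:ℝ) ≤ (R2 (k-1) : ℝ) := Nat.cast_nonneg _
  have hT1' : ((T1:ℝ)) ≤ n1 := by exact_mod_cast hT1
  have hT2' : ((T2:ℝ)) ≤ n2 := by exact_mod_cast hT2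
  have hT1nn : (0:ℝ) ≤ (T1:ℝ) := Nat.cast_nonneg _
  have hT2nn : (0:ℝ) ≤ (T2:ℝ) := Nat.cast_nonneg _
  have hfrac2 : (R2 (k-1) : ℝ) / n2 ≤ 1 - (T2:ℝ)/n2 := by
    rw [div_le_iff₀ hn2', sub_mul, one_mul, div_mul_cancel₀ _ hn2'.ne']
    linarith [hR2mono.trans hR2k]
  have hfrac1 : (R1 k : ℝ) / n1 ≤ 1 - (T1:ℝ)/n1 := by
    rw [div_le_iff₀ hn1', sub_mul, one_mul, div_mul_cancel₀ _ hn1'.ne']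
    linarith
  have h1 : A1 k ≤ a1 + (1 - (T2 : ℝ) / n2) * a2 := by
    rw [hA1]
    nlinarith [mul_le_mul_of_nonneg_right hfrac2 ha2]
  have hstar1nn : 0 ≤ a1 + (1 - (T2 : ℝ) / n2) * a2 := by
    have : 0 ≤ 1 - (T2:ℝ)/n2 := by
      have := div_le_one_of_le₀ hT2' hn2'.le
      linarith
    positivity
  have h2 : A2 k ≤ a2 + (1 - (T1 : ℝ) / n1) * (a1 + (1 - (T2 : ℝ) / n2) * a2) := by
    rw [hA2]
    have hA1nn : 0 ≤ A1 k := by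
      rw [hA1]; positivity
    have h3 : (R1 k : ℝ)/n1 * A1 k ≤ (1 - (T1:ℝ)/n1) * (a1 + (1 - (T2 : ℝ) / n2) * a2) := by
      apply mul_le_mul hfrac1 h1 hA1nn
      have := div_le_one_of_le₀ hT1' hn1'.le
      linarith
    linarith
  refine ⟨h1, h2, ?_⟩
  set t1 := (T1:ℝ)/n1 with ht1
  set t2 := (T2:ℝ)/n2 with ht2
  have ht1b : 0 ≤ t1 ∧ t1 ≤ 1 := ⟨by positivity, div_le_one_of_le₀ hT1' hn1'.le⟩
  have ht2b : 0 ≤ t2 ∧ t2 ≤ 1 := ⟨by positivity, div_le_one_of_le₀ hT2' hn2'.le⟩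
  obtain ⟨h10, h11⟩ := ht1b
  obtain ⟨h20, h21⟩ := ht2b
  have hu : 0 ≤ 1 - t1 := by linarith
  have hv : 0 ≤ 1 - t2 := by linarith
  nlinarith [mul_nonneg (mul_nonneg hu hv) ha1,
    mul_nonneg (mul_nonneg (mul_nonneg hu hv) hv) ha2]
end

section
/- The two-family Bonferroni-based gatekeeping procedure with retesting controls the global FWER: let p_{1j} (j ≤ n_1) and p_{2j} (j ≤ n_2) be p-values with true-null p-values stochastically superuniform (Pr(p ≤ u) ≤ u), and run Algorithm 1 with initial levels α_1, α_2 summing to α: at each stage the Bonferroni procedure rejects H_{ij} iff p_{ij} ≤ α_{i(k)}/n_i with α_{1(1)} = α_1, α_{2(k)} = α_2 + (|R_{1(k)}|/n_1)α_{1(k)}, and α_{1(k)} = α_1 + (|R_{2(k−1)}|/n_2)α_2 for k ≥ 2, where |R_{i(k)}| counts rejections in family i at stage k. Then for every configuration of true nulls, the probability that some true null hypothesis is ever rejected (at any stage) is at most α. -/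
open MeasureTheory

set_option maxHeartbeats 1600000 in
/-- Theorem 1 for `m = 2` (Algorithm 1): the two-family Bonferroni-based
gatekeeping procedure with retesting strongly controls the global FWER at
level `α = α_1 + α_2` under arbitrary dependence. -/
theorem two_family_retesting_FWER_control
    {Ω : Type*} [MeasurableSpace Ω] (μ : Measure Ω) [IsProbabilityMeasure μ]
    (n1 n2 : ℕ) (hn1 : 0 < n1) (hn2 : 0 < n2)
    (p1 : Fin n1 → Ω → ℝ) (p2 : Fin n2 → Ω → ℝ)
    (hmeas1 : ∀ j, Measurable (p1 j)) (hmeas2 : ∀ j, Measurable (p2 j))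
    (T1 : Finset (Fin n1)) (T2 : Finset (Fin n2))
    (hsuper1 : ∀ j ∈ T1, ∀ u ∈ Set.Icc (0 : ℝ) 1,
      μ {ω | p1 j ω ≤ u} ≤ ENNReal.ofReal u)
    (hsuper2 : ∀ j ∈ T2, ∀ u ∈ Set.Icc (0 : ℝ) 1,
      μ {ω | p2 j ω ≤ u} ≤ ENNReal.ofReal u)
    (a1 a2 α : ℝ) (ha1 : 0 ≤ a1) (ha2 : 0 ≤ a2) (hα : a1 + a2 = α)
    -- stagewise local levels, as functions of the data:
    (A1 A2 : ℕ → Ω → ℝ)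
    (hA1one : ∀ ω, A1 1 ω = a1)
    (hA2 : ∀ k, 1 ≤ k → ∀ ω, A2 k ω = a2
      + (((Finset.univ.filter fun j => p1 j ω ≤ A1 k ω / n1).card : ℝ) / n1)
        * A1 k ω)
    (hA1 : ∀ k, 2 ≤ k → ∀ ω, A1 k ω = a1
      + (((Finset.univ.filter fun j => p2 j ω ≤ A2 (k - 1) ω / n2).card : ℝ) / n2)
        * a2) :
    μ {ω | ∃ k, 1 ≤ k ∧
        ((∃ j ∈ T1, p1 j ω ≤ A1 k ω / n1) ∨ (∃ j ∈ T2, p2 j ω ≤ A2 k ω / n2))}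
      ≤ ENNReal.ofReal α := by
  classical
  have hn1' : (0:ℝ) < n1 := by exact_mod_cast hn1
  have hn2' : (0:ℝ) < n2 := by exact_mod_cast hn2
  set t1 : ℕ := T1.card with ht1def
  set t2 : ℕ := T2.card with ht2def
  have ht1 : t1 ≤ n1 := by
    calc t1 ≤ (Finset.univ : Finset (Fin n1)).card := Finset.card_le_card (Finset.subset_univ T1)
    _ = n1 := by simp
  have ht2 : t2 ≤ n2 := by
    calc t2 ≤ (Finset.univ : Finset (Fin n2)).card := Finset.card_le_card (Finset.subset_univ T2)
    _ = n2 := by simp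
  -- deterministic bounding levels
  set b1 : ℝ := a1 + (((n2 : ℝ) - t2) / n2) * a2 with hb1def
  set b2 : ℝ := a2 + (((n1 : ℝ) - t1) / n1) * b1 with hb2def
  have hfrac2 : (0:ℝ) ≤ ((n2 : ℝ) - t2) / n2 := by
    apply div_nonneg _ hn2'.le
    have : (t2:ℝ) ≤ n2 := by exact_mod_cast ht2
    linarith
  have hfrac1 : (0:ℝ) ≤ ((n1 : ℝ) - t1) / n1 := by
    apply div_nonneg _ hn1'.le
    have : (t1:ℝ) ≤ n1 := by exact_mod_cast ht1
    linarith
  have hb1 : 0 ≤ b1 := by positivity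
  have hb2 : 0 ≤ b2 := by positivity
  -- pointwise inclusion into a union of simple events
  have hsub : {ω | ∃ k, 1 ≤ k ∧
        ((∃ j ∈ T1, p1 j ω ≤ A1 k ω / n1) ∨ (∃ j ∈ T2, p2 j ω ≤ A2 k ω / n2))}
      ⊆ (⋃ j ∈ T1, {ω | p1 j ω ≤ b1 / n1}) ∪ (⋃ j ∈ T2, {ω | p2 j ω ≤ b2 / n2}) := by
    intro ω hω
    simp only [Set.mem_setOf_eq] at hω
    -- minimal stage with a true rejection
    obtain ⟨k0, ⟨hk01, hrej⟩, hmin⟩ :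
        ∃ k0, (1 ≤ k0 ∧
          ((∃ j ∈ T1, p1 j ω ≤ A1 k0 ω / n1) ∨ (∃ j ∈ T2, p2 j ω ≤ A2 k0 ω / n2))) ∧
          ∀ m, m < k0 → ¬ (1 ≤ m ∧
            ((∃ j ∈ T1, p1 j ω ≤ A1 m ω / n1) ∨ (∃ j ∈ T2, p2 j ω ≤ A2 m ω / n2))) :=
      ⟨Nat.find hω, Nat.find_spec hω, fun m hm => Nat.find_min hω hm⟩
    -- Step A : A1 k0 ω ≤ b1, and 0 ≤ A1 k0 ω
    have hA1bound : A1 k0 ω ≤ b1 := by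
      rcases eq_or_lt_of_le hk01 with h1 | h2
      · rw [← h1, hA1one, hb1def]
        nlinarith [mul_nonneg hfrac2 ha2]
      · -- k0 ≥ 2
        have hk2 : 2 ≤ k0 := h2
        rw [hA1 k0 hk2 ω]
        -- no true rejection at stage k0 - 1
        have hprev := hmin (k0 - 1) (by omega)
        have hk11 : 1 ≤ k0 - 1 := by omega
        have hnoT2 : ∀ j ∈ T2, ¬ (p2 j ω ≤ A2 (k0 - 1) ω / n2) := by
          intro j hj hle
          exact hprev ⟨hk11, Or.inr ⟨j, hj, hle⟩⟩
        have hcard : (Finset.univ.filter fun j => p2 j ω ≤ A2 (k0 - 1) ω / n2).card ≤ n2 - t2 := by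
          have hsubT : (Finset.univ.filter fun j => p2 j ω ≤ A2 (k0 - 1) ω / n2) ⊆ T2ᶜ := by
            intro j hj
            simp only [Finset.mem_filter, Finset.mem_univ, true_and] at hj
            simp only [Finset.mem_compl]
            intro hjT2
            exact hnoT2 j hjT2 hj
          calc _ ≤ T2ᶜ.card := Finset.card_le_card hsubT
            _ = n2 - t2 := by simp [Finset.card_compl, ht2def]
        have hcard' : ((Finset.univ.filter fun j => p2 j ω ≤ A2 (k0 - 1) ω / n2).card : ℝ)
            ≤ (n2 : ℝ) - t2 := by
          have := (Nat.cast_le (α := ℝ)).mpr hcard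
          rwa [Nat.cast_sub ht2] at this
        have : ((Finset.univ.filter fun j => p2 j ω ≤ A2 (k0 - 1) ω / n2).card : ℝ) / n2
            ≤ ((n2:ℝ) - t2) / n2 := by
          exact (div_le_div_iff_of_pos_right hn2').mpr hcard'
        nlinarith [this, ha2]
    have hA1nonneg : 0 ≤ A1 k0 ω := by
      rcases eq_or_lt_of_le hk01 with h1 | h2
      · rw [← h1, hA1one]; exact ha1
      · rw [hA1 k0 h2 ω]
        positivity
    by_cases hc : ∃ j ∈ T1, p1 j ω ≤ A1 k0 ω / n1
    · obtain ⟨j, hj, hle⟩ := hc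
      left
      refine Set.mem_biUnion hj ?_
      simp only [Set.mem_setOf_eq]
      calc p1 j ω ≤ A1 k0 ω / n1 := hle
        _ ≤ b1 / n1 := (div_le_div_iff_of_pos_right hn1').mpr hA1bound
    · -- true rejection must be in family 2
      obtain ⟨j, hj, hle⟩ := hrej.resolve_left hc
      right
      refine Set.mem_biUnion hj ?_
      simp only [Set.mem_setOf_eq]
      have hA2bound : A2 k0 ω ≤ b2 := by
        rw [hA2 k0 hk01 ω]
        have hcard : (Finset.univ.filter fun i => p1 i ω ≤ A1 k0 ω / n1).card ≤ n1 - t1 := by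
          have hsubT : (Finset.univ.filter fun i => p1 i ω ≤ A1 k0 ω / n1) ⊆ T1ᶜ := by
            intro i hi
            simp only [Finset.mem_filter, Finset.mem_univ, true_and] at hi
            simp only [Finset.mem_compl]
            intro hiT1
            exact hc ⟨i, hiT1, hi⟩
          calc _ ≤ T1ᶜ.card := Finset.card_le_card hsubT
            _ = n1 - t1 := by simp [Finset.card_compl, ht1def]
        have hcard' : ((Finset.univ.filter fun i => p1 i ω ≤ A1 k0 ω / n1).card : ℝ)
            ≤ (n1 : ℝ) - t1 := by
          have := (Nat.cast_le (α := ℝ)).mpr hcard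
          rwa [Nat.cast_sub ht1] at this
        have hdiv : ((Finset.univ.filter fun i => p1 i ω ≤ A1 k0 ω / n1).card : ℝ) / n1
            ≤ ((n1:ℝ) - t1) / n1 := (div_le_div_iff_of_pos_right hn1').mpr hcard'
        have hdivnn : (0:ℝ) ≤ ((Finset.univ.filter fun i => p1 i ω ≤ A1 k0 ω / n1).card : ℝ) / n1 := by
          positivity
        have hmul : ((Finset.univ.filter fun i => p1 i ω ≤ A1 k0 ω / n1).card : ℝ) / n1 * A1 k0 ω
            ≤ (((n1:ℝ) - t1) / n1) * b1 :=
          mul_le_mul hdiv hA1bound hA1nonneg hfrac1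
        linarith
      calc p2 j ω ≤ A2 k0 ω / n2 := hle
        _ ≤ b2 / n2 := (div_le_div_iff_of_pos_right hn2').mpr hA2bound
  -- superuniformity extended to all nonnegative u
  have hsup1' : ∀ j ∈ T1, ∀ u : ℝ, 0 ≤ u → μ {ω | p1 j ω ≤ u} ≤ ENNReal.ofReal u := by
    intro j hj u hu
    rcases le_or_gt u 1 with h1 | h1
    · exact hsuper1 j hj u ⟨hu, h1⟩
    · calc μ {ω | p1 j ω ≤ u} ≤ 1 := prob_le_one
        _ = ENNReal.ofReal 1 := by simp
        _ ≤ ENNReal.ofReal u := ENNReal.ofReal_le_ofReal h1.le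
  have hsup2' : ∀ j ∈ T2, ∀ u : ℝ, 0 ≤ u → μ {ω | p2 j ω ≤ u} ≤ ENNReal.ofReal u := by
    intro j hj u hu
    rcases le_or_gt u 1 with h1 | h1
    · exact hsuper2 j hj u ⟨hu, h1⟩
    · calc μ {ω | p2 j ω ≤ u} ≤ 1 := prob_le_one
        _ = ENNReal.ofReal 1 := by simp
        _ ≤ ENNReal.ofReal u := ENNReal.ofReal_le_ofReal h1.le
  -- measure chain
  calc μ {ω | ∃ k, 1 ≤ k ∧
        ((∃ j ∈ T1, p1 j ω ≤ A1 k ω / n1) ∨ (∃ j ∈ T2, p2 j ω ≤ A2 k ω / n2))}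
      ≤ μ ((⋃ j ∈ T1, {ω | p1 j ω ≤ b1 / n1}) ∪ (⋃ j ∈ T2, {ω | p2 j ω ≤ b2 / n2})) :=
        measure_mono hsub
    _ ≤ μ (⋃ j ∈ T1, {ω | p1 j ω ≤ b1 / n1}) + μ (⋃ j ∈ T2, {ω | p2 j ω ≤ b2 / n2}) :=
        measure_union_le _ _
    _ ≤ (∑ j ∈ T1, μ {ω | p1 j ω ≤ b1 / n1}) + (∑ j ∈ T2, μ {ω | p2 j ω ≤ b2 / n2}) := by
        gcongr <;> exact measure_biUnion_finset_le _ _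
    _ ≤ (∑ j ∈ T1, ENNReal.ofReal (b1 / n1)) + (∑ j ∈ T2, ENNReal.ofReal (b2 / n2)) := by
        gcongr with j hj j hj
        · exact hsup1' j hj _ (by positivity)
        · exact hsup2' j hj _ (by positivity)
    _ = (t1 : ENNReal) * ENNReal.ofReal (b1 / n1) + (t2 : ENNReal) * ENNReal.ofReal (b2 / n2) := by
        simp [Finset.sum_const, nsmul_eq_mul, ht1def, ht2def]
    _ = ENNReal.ofReal ((t1:ℝ) * (b1 / n1) + (t2:ℝ) * (b2 / n2)) := by
        rw [ENNReal.ofReal_add (by positivity) (by positivity),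
          ENNReal.ofReal_mul (by positivity), ENNReal.ofReal_mul (by positivity)]
        simp
    _ ≤ ENNReal.ofReal α := by
        apply ENNReal.ofReal_le_ofReal
        -- the key real inequality
        have ht1R : (t1:ℝ) ≤ n1 := by exact_mod_cast ht1
        have ht2R : (t2:ℝ) ≤ n2 := by exact_mod_cast ht2
        have e1 : ((n2:ℝ) - t2)/n2 = 1 - (t2:ℝ)/n2 := by field_simp
        have e2 : ((n1:ℝ) - t1)/n1 = 1 - (t1:ℝ)/n1 := by field_simp
        have hu : (0:ℝ) ≤ (t1:ℝ)/n1 := by positivity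
        have hv : (0:ℝ) ≤ (t2:ℝ)/n2 := by positivity
        have hu1 : (t1:ℝ)/n1 ≤ 1 := by rw [div_le_one hn1']; exact ht1R
        have hv1 : (t2:ℝ)/n2 ≤ 1 := by rw [div_le_one hn2']; exact ht2R
        have key : ∀ u v : ℝ, 0 ≤ u → u ≤ 1 → 0 ≤ v → v ≤ 1 →
            u * (a1 + (1-v)*a2) + v * (a2 + (1-u)*(a1 + (1-v)*a2)) ≤ a1 + a2 := by
          intro u v hu hu1 hv hv1
          have hb : 0 ≤ a1 + (1-v)*a2 := by nlinarith
          nlinarith [mul_nonneg hb (mul_nonneg (by linarith : (0:ℝ) ≤ 1-u) (by linarith : (0:ℝ) ≤ 1-v))]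
        have := key ((t1:ℝ)/n1) ((t2:ℝ)/n2) hu hu1 hv hv1
        rw [hb2def, hb1def, e1, e2]
        have lhs_eq : (t1:ℝ) * ((a1 + (1 - (t2:ℝ)/n2) * a2) / n1)
            + (t2:ℝ) * ((a2 + (1 - (t1:ℝ)/n1) * (a1 + (1 - (t2:ℝ)/n2) * a2)) / n2)
            = (t1:ℝ)/n1 * (a1 + (1-(t2:ℝ)/n2)*a2)
              + (t2:ℝ)/n2 * (a2 + (1-(t1:ℝ)/n1)*(a1 + (1-(t2:ℝ)/n2)*a2)) := by
          ring
        rw [lhs_eq]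
        linarith
end

section
/- The two-layer Bonferroni-based gatekeeping procedure with retesting (Algorithm 3) strongly controls the global FWER at level α under arbitrary dependence: given families F_{ij} (i = 1,2; j ≤ m_i) of sizes n_{ij}, superuniform true-null p-values, initial levels α_{ij} ≥ 0 with total α, and transition coefficients g_{ijkl} as specified, if at each stage each family is tested by Bonferroni at its updated local level and the rejection sets are nested across stages, then the probability that any true null hypothesis is ever rejected is at most α. -/
/-!
Call `b₁ j = α_{1j} + ∑_l ((n_{2l} - t_{2l}) / n_{2l}) g_{2l1j} α_{2l}` and
`b₂ l = α_{2l} + ∑_j ((n_{1j} - t_{1j}) / n_{1j}) g_{1j2l} b₁ j`, where `t_{ij}` is the number of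
true nulls in `F_{ij}`: these are the local levels the procedure reaches when every false null is
rejected. While no true null has been rejected, the rejected fraction of a family is at most its
fraction of false nulls, so by induction on the stage the local levels stay below `b₁` and `b₂`.
Hence a true null can only be rejected if its p-value falls below the deterministic Bonferroni
threshold `b / n` of its family, and the union bound over these fixed thresholds gives
`∑_j t_{1j} b₁ j / n_{1j} + ∑_l t_{2l} b₂ l / n_{2l}`, which the row-sum conditions on `g` bound by
`∑_j α_{1j} + ∑_l α_{2l} = α`.
-/

open MeasureTheory Finset

noncomputable section

def Superuniform {Ω : Type*} [MeasurableSpace Ω] (μ : Measure Ω) (p : Ω → ℝ) : Prop :=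
  ∀ u ∈ Set.Icc (0 : ℝ) 1, μ {ω | p ω ≤ u} ≤ ENNReal.ofReal u

def nullFraction {n : ℕ} (T : Finset (Fin n)) : ℝ := #T / n

def nonNullFraction {n : ℕ} (T : Finset (Fin n)) : ℝ := (n - #T) / n

def bonferroniRejections {n : ℕ} (x : Fin n → ℝ) (a : ℝ) : Finset (Fin n) :=
  Finset.univ.filter fun s => x s ≤ a / n

def transferLevel {ι κ : Type*} [Fintype ι] (a : κ → ℝ) (c : ι → ℝ) (g : ι → κ → ℝ)
    (x : ι → ℝ) (l : κ) : ℝ :=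
  a l + ∑ j, c j * g j l * x j

end

section Fractions

variable {n : ℕ} (T : Finset (Fin n))

lemma nullFraction_nonneg : 0 ≤ nullFraction T := by
  unfold nullFraction
  positivity

lemma nonNullFraction_nonneg : 0 ≤ nonNullFraction T := by
  have hT : (#T : ℝ) ≤ n := by exact_mod_cast (card_le_univ T).trans_eq (Fintype.card_fin n)
  exact div_nonneg (sub_nonneg.2 hT) n.cast_nonneg

lemma nullFraction_add_nonNullFraction_le_one : nullFraction T + nonNullFraction T ≤ 1 := by
  rw [nullFraction, nonNullFraction, ← add_div, add_sub_cancel]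
  exact div_self_le_one _

lemma nullFraction_le_one : nullFraction T ≤ 1 := by
  linarith [nullFraction_add_nonNullFraction_le_one T, nonNullFraction_nonneg T]

lemma card_div_le_nonNullFraction {S : Finset (Fin n)} (h : Disjoint T S) :
    (#S : ℝ) / n ≤ nonNullFraction T := by
  have hS : #S ≤ n - #T := by
    simpa [card_compl] using card_le_card h.le_compl_left
  have hT : #T ≤ n := (card_le_univ T).trans_eq (Fintype.card_fin n)
  have hS' : (#S : ℝ) ≤ n - #T := by
    rw [← Nat.cast_sub hT]
    exact_mod_cast hS
  exact div_le_div_of_nonneg_right hS' n.cast_nonneg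

variable {T}

lemma disjoint_bonferroniRejections {x : Fin n → ℝ} {a b : ℝ} (hab : a ≤ b)
    (hT : ∀ s ∈ T, b / n < x s) : Disjoint T (bonferroniRejections x a) := by
  refine disjoint_left.2 fun s hs hrej => (hT s hs).not_ge ?_
  exact (mem_filter.1 hrej).2.trans (div_le_div_of_nonneg_right hab n.cast_nonneg)

end Fractions

section Transfer

variable {ι κ : Type*} [Fintype ι] {a : κ → ℝ} {c c' x x' : ι → ℝ} {g : ι → κ → ℝ}

lemma le_transferLevel (hc : ∀ j, 0 ≤ c j) (hg : ∀ j l, 0 ≤ g j l) (hx : ∀ j, 0 ≤ x j)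
    (l : κ) : a l ≤ transferLevel a c g x l :=
  le_add_of_nonneg_right (sum_nonneg fun j _ => mul_nonneg (mul_nonneg (hc j) (hg j l)) (hx j))

lemma transferLevel_nonneg (ha : ∀ l, 0 ≤ a l) (hc : ∀ j, 0 ≤ c j) (hg : ∀ j l, 0 ≤ g j l)
    (hx : ∀ j, 0 ≤ x j) (l : κ) : 0 ≤ transferLevel a c g x l :=
  (ha l).trans (le_transferLevel hc hg hx l)

lemma transferLevel_mono (hc : ∀ j, 0 ≤ c j) (hcc' : ∀ j, c j ≤ c' j) (hg : ∀ j l, 0 ≤ g j l)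
    (hxx' : ∀ j, x j ≤ x' j) (hx' : ∀ j, 0 ≤ x' j) (l : κ) :
    transferLevel a c g x l ≤ transferLevel a c' g x' l :=
  add_le_add_right (sum_le_sum fun j _ => mul_le_mul_of_nonneg
    (mul_le_mul_of_nonneg_right (hcc' j) (hg j l)) (hxx' j) (mul_nonneg (hc j) (hg j l)) (hx' j)) _

lemma sum_mul_transferLevel_le [Fintype κ] {q : κ → ℝ} (hq : ∀ l, q l ≤ 1)
    (hg : ∀ j l, 0 ≤ g j l) (hrow : ∀ j, ∑ l, g j l ≤ 1) (hcx : ∀ j, 0 ≤ c j * x j) :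
    ∑ l, q l * transferLevel a c g x l ≤ ∑ l, q l * a l + ∑ j, c j * x j := by
  have hcol : ∀ j, c j * x j * ∑ l, q l * g j l ≤ c j * x j := fun j =>
    mul_le_of_le_one_right (hcx j)
      ((sum_le_sum fun l _ => mul_le_of_le_one_left (hg j l) (hq l)).trans (hrow j))
  calc ∑ l, q l * transferLevel a c g x l
      = ∑ l, q l * a l + ∑ j, c j * x j * ∑ l, q l * g j l := by
        simp only [transferLevel, mul_add, sum_add_distrib, mul_sum]
        rw [sum_comm (f := fun l j => q l * (c j * g j l * x j))]
        congr 1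
        exact sum_congr rfl fun j _ => sum_congr rfl fun l _ => by ring
    _ ≤ ∑ l, q l * a l + ∑ j, c j * x j := add_le_add_right (sum_le_sum fun j _ => hcol j) _

end Transfer

lemma sum_mul_add_sum_mul_le {ι : Type*} [Fintype ι] {q r b : ι → ℝ}
    (hqr : ∀ i, q i + r i ≤ 1) (hb : ∀ i, 0 ≤ b i) :
    ∑ i, q i * b i + ∑ i, r i * b i ≤ ∑ i, b i := by
  rw [← sum_add_distrib]
  exact sum_le_sum fun i _ => by
    rw [← add_mul]
    exact mul_le_of_le_one_left (hb i) (hqr i)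

section Superuniform

variable {Ω : Type*} [MeasurableSpace Ω] {μ : Measure Ω} [IsProbabilityMeasure μ]

lemma Superuniform.measure_le {p : Ω → ℝ} (hp : Superuniform μ p) {u : ℝ} (hu : 0 ≤ u) :
    μ {ω | p ω ≤ u} ≤ ENNReal.ofReal u := by
  rcases le_or_gt u 1 with h1 | h1
  · exact hp u ⟨hu, h1⟩
  · exact prob_le_one.trans (by simpa using ENNReal.ofReal_le_ofReal h1.le)

lemma measure_biUnion_le_of_superuniform {n : ℕ} {p : Fin n → Ω → ℝ} {T : Finset (Fin n)}
    (hp : ∀ s ∈ T, Superuniform μ (p s)) {b : ℝ} (hb : 0 ≤ b) :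
    μ (⋃ s ∈ T, {ω | p s ω ≤ b / n}) ≤ ENNReal.ofReal (nullFraction T * b) :=
  calc μ (⋃ s ∈ T, {ω | p s ω ≤ b / n})
      ≤ ∑ s ∈ T, μ {ω | p s ω ≤ b / n} := measure_biUnion_finset_le _ _
    _ ≤ ∑ s ∈ T, ENNReal.ofReal (b / n) :=
        sum_le_sum fun s hs => (hp s hs).measure_le (by positivity)
    _ = ENNReal.ofReal (nullFraction T * b) := by
        rw [sum_const, nsmul_eq_mul, nullFraction, div_mul_eq_mul_div, mul_div_assoc,
          ENNReal.ofReal_mul (by positivity), ENNReal.ofReal_natCast]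

lemma measure_iUnion_biUnion_le_of_superuniform {ι : Type*} [Fintype ι] {n : ι → ℕ}
    {p : (i : ι) → Fin (n i) → Ω → ℝ} {T : (i : ι) → Finset (Fin (n i))}
    (hp : ∀ i, ∀ s ∈ T i, Superuniform μ (p i s)) {b : ι → ℝ} (hb : ∀ i, 0 ≤ b i) :
    μ (⋃ i, ⋃ s ∈ T i, {ω | p i s ω ≤ b i / n i})
      ≤ ENNReal.ofReal (∑ i, nullFraction (T i) * b i) := by
  rw [ENNReal.ofReal_sum_of_nonneg fun i _ => mul_nonneg (nullFraction_nonneg _) (hb i)]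
  exact (measure_iUnion_fintype_le _ _).trans
    (sum_le_sum fun i _ => measure_biUnion_le_of_superuniform (hp i) (hb i))

end Superuniform

/-- The recursion of the local levels `A1 j k`, `A2 l k` of Algorithm 3 at stages `k ≥ 1`, for
observed p-values `x1`, `x2`. -/
structure IsRetestingLevels {m1 m2 : ℕ} {n1 : Fin m1 → ℕ} {n2 : Fin m2 → ℕ}
    (x1 : (j : Fin m1) → Fin (n1 j) → ℝ) (x2 : (l : Fin m2) → Fin (n2 l) → ℝ)
    (a1 : Fin m1 → ℝ) (a2 : Fin m2 → ℝ) (g12 : Fin m1 → Fin m2 → ℝ) (g21 : Fin m2 → Fin m1 → ℝ)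
    (A1 : Fin m1 → ℕ → ℝ) (A2 : Fin m2 → ℕ → ℝ) : Prop where
  first : ∀ j, A1 j 1 = a1 j
  layer2 : ∀ k, 1 ≤ k → ∀ l, A2 l k =
    transferLevel a2 (fun j => #(bonferroniRejections (x1 j) (A1 j k)) / n1 j) g12 (A1 · k) l
  layer1 : ∀ k, 2 ≤ k → ∀ j, A1 j k =
    transferLevel a1 (fun l => #(bonferroniRejections (x2 l) (A2 l (k - 1))) / n2 l) g21 a2 j

section TwoLayer

variable {m1 m2 : ℕ} {n1 : Fin m1 → ℕ} {n2 : Fin m2 → ℕ}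
  {x1 : (j : Fin m1) → Fin (n1 j) → ℝ} {x2 : (l : Fin m2) → Fin (n2 l) → ℝ}
  {T1 : (j : Fin m1) → Finset (Fin (n1 j))} {T2 : (l : Fin m2) → Finset (Fin (n2 l))}
  {a1 : Fin m1 → ℝ} {a2 : Fin m2 → ℝ} {g12 : Fin m1 → Fin m2 → ℝ} {g21 : Fin m2 → Fin m1 → ℝ}
  {A1 : Fin m1 → ℕ → ℝ} {A2 : Fin m2 → ℕ → ℝ}

-- `b₁` and `b₂`: the local levels reached when every false null is rejected.
local notation "worstLevel₁" => transferLevel a1 (fun l => nonNullFraction (T2 l)) g21 a2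
local notation "worstLevel₂" => transferLevel a2 (fun j => nonNullFraction (T1 j)) g12 worstLevel₁

lemma worstLevel₁_nonneg (ha1 : ∀ j, 0 ≤ a1 j) (ha2 : ∀ l, 0 ≤ a2 l)
    (hg21 : ∀ l j, 0 ≤ g21 l j) (j : Fin m1) : 0 ≤ worstLevel₁ j :=
  transferLevel_nonneg ha1 (fun _ => nonNullFraction_nonneg _) hg21 ha2 j

lemma stageLevels_le_worstLevels (hlev : IsRetestingLevels x1 x2 a1 a2 g12 g21 A1 A2)
    (ha1 : ∀ j, 0 ≤ a1 j) (ha2 : ∀ l, 0 ≤ a2 l)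
    (hg12 : ∀ j l, 0 ≤ g12 j l) (hg21 : ∀ l j, 0 ≤ g21 l j)
    (hx1 : ∀ j, ∀ s ∈ T1 j, worstLevel₁ j / n1 j < x1 j s)
    (hx2 : ∀ l, ∀ s ∈ T2 l, worstLevel₂ l / n2 l < x2 l s) :
    ∀ k, 1 ≤ k → (∀ j, A1 j k ≤ worstLevel₁ j) ∧ ∀ l, A2 l k ≤ worstLevel₂ l := by
  have layer2 : ∀ k, 1 ≤ k → (∀ j, A1 j k ≤ worstLevel₁ j) → ∀ l, A2 l k ≤ worstLevel₂ l := by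
    intro k hk h1 l
    rw [hlev.layer2 k hk l]
    exact transferLevel_mono (fun _ => by positivity)
      (fun j => card_div_le_nonNullFraction _ (disjoint_bonferroniRejections (h1 j) (hx1 j)))
      hg12 h1 (worstLevel₁_nonneg ha1 ha2 hg21) l
  have layer1 : ∀ k, 1 ≤ k → (∀ l, A2 l k ≤ worstLevel₂ l) →
      ∀ j, A1 j (k + 1) ≤ worstLevel₁ j := by
    intro k hk h2 j
    rw [hlev.layer1 (k + 1) (by omega) j, Nat.add_sub_cancel]
    exact transferLevel_mono (fun _ => by positivity)
      (fun l => card_div_le_nonNullFraction _ (disjoint_bonferroniRejections (h2 l) (hx2 l)))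
      hg21 (fun _ => le_rfl) ha2 j
  intro k hk
  induction k, hk using Nat.le_induction with
  | base =>
    have h1 : ∀ j, A1 j 1 ≤ worstLevel₁ j := fun j =>
      (hlev.first j).trans_le (le_transferLevel (fun _ => nonNullFraction_nonneg _) hg21 ha2 j)
    exact ⟨h1, layer2 1 le_rfl h1⟩
  | succ k hk ih =>
    have h1 := layer1 k hk ih.2
    exact ⟨h1, layer2 (k + 1) (by omega) h1⟩

lemma exists_le_worstLevel_of_rejected (hlev : IsRetestingLevels x1 x2 a1 a2 g12 g21 A1 A2)
    (ha1 : ∀ j, 0 ≤ a1 j) (ha2 : ∀ l, 0 ≤ a2 l)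
    (hg12 : ∀ j l, 0 ≤ g12 j l) (hg21 : ∀ l j, 0 ≤ g21 l j)
    (hrej : ∃ k, 1 ≤ k ∧ ((∃ j, ∃ s ∈ T1 j, x1 j s ≤ A1 j k / n1 j)
      ∨ ∃ l, ∃ s ∈ T2 l, x2 l s ≤ A2 l k / n2 l)) :
    (∃ j, ∃ s ∈ T1 j, x1 j s ≤ worstLevel₁ j / n1 j)
      ∨ ∃ l, ∃ s ∈ T2 l, x2 l s ≤ worstLevel₂ l / n2 l := by
  by_contra! hx
  obtain ⟨k, hk, hrej⟩ := hrej
  obtain ⟨h1, h2⟩ := stageLevels_le_worstLevels hlev ha1 ha2 hg12 hg21 hx.1 hx.2 k hk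
  rcases hrej with ⟨j, s, hs, hp⟩ | ⟨l, s, hs, hp⟩
  · exact (hx.1 j s hs).not_ge (hp.trans (div_le_div_of_nonneg_right (h1 j) (n1 j).cast_nonneg))
  · exact (hx.2 l s hs).not_ge (hp.trans (div_le_div_of_nonneg_right (h2 l) (n2 l).cast_nonneg))

lemma sum_nullFraction_mul_worstLevels_le (ha1 : ∀ j, 0 ≤ a1 j) (ha2 : ∀ l, 0 ≤ a2 l)
    (hg12 : ∀ j l, 0 ≤ g12 j l) (hg21 : ∀ l j, 0 ≤ g21 l j)
    (hg12row : ∀ j, ∑ l, g12 j l ≤ 1) (hg21row : ∀ l, ∑ j, g21 l j ≤ 1) :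
    ∑ j, nullFraction (T1 j) * worstLevel₁ j + ∑ l, nullFraction (T2 l) * worstLevel₂ l
      ≤ ∑ j, a1 j + ∑ l, a2 l := by
  have hb1 := worstLevel₁_nonneg (T2 := T2) ha1 ha2 hg21
  have h2 : ∑ l, nullFraction (T2 l) * worstLevel₂ l
      ≤ ∑ l, nullFraction (T2 l) * a2 l + ∑ j, nonNullFraction (T1 j) * worstLevel₁ j :=
    sum_mul_transferLevel_le (fun _ => nullFraction_le_one _) hg12 hg12row
      fun j => mul_nonneg (nonNullFraction_nonneg _) (hb1 j)
  have h1 : ∑ j, worstLevel₁ j ≤ ∑ j, a1 j + ∑ l, nonNullFraction (T2 l) * a2 l := by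
    simpa only [one_mul] using sum_mul_transferLevel_le (q := fun _ => 1) (fun _ => le_rfl)
      hg21 hg21row fun l => mul_nonneg (nonNullFraction_nonneg _) (ha2 l)
  have hsplit1 :=
    sum_mul_add_sum_mul_le (fun j => nullFraction_add_nonNullFraction_le_one (T1 j)) hb1
  have hsplit2 :=
    sum_mul_add_sum_mul_le (fun l => nullFraction_add_nonNullFraction_le_one (T2 l)) ha2
  linarith

end TwoLayer

theorem two_layer_retesting_FWER_control_general
    {Ω : Type*} [MeasurableSpace Ω] (μ : Measure Ω) [IsProbabilityMeasure μ]
    (m1 m2 : ℕ)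
    (n1 : Fin m1 → ℕ) (n2 : Fin m2 → ℕ)
    (p1 : (j : Fin m1) → Fin (n1 j) → Ω → ℝ)
    (p2 : (l : Fin m2) → Fin (n2 l) → Ω → ℝ)
    (T1 : (j : Fin m1) → Finset (Fin (n1 j)))
    (T2 : (l : Fin m2) → Finset (Fin (n2 l)))
    (hsuper1 : ∀ j, ∀ s ∈ T1 j, ∀ u ∈ Set.Icc (0 : ℝ) 1,
      μ {ω | p1 j s ω ≤ u} ≤ ENNReal.ofReal u)
    (hsuper2 : ∀ l, ∀ s ∈ T2 l, ∀ u ∈ Set.Icc (0 : ℝ) 1,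
      μ {ω | p2 l s ω ≤ u} ≤ ENNReal.ofReal u)
    (a1 : Fin m1 → ℝ) (a2 : Fin m2 → ℝ) (α : ℝ)
    (ha1 : ∀ j, 0 ≤ a1 j) (ha2 : ∀ l, 0 ≤ a2 l)
    (hα : (∑ j, a1 j) + ∑ l, a2 l = α)
    (g12 : Fin m1 → Fin m2 → ℝ) (g21 : Fin m2 → Fin m1 → ℝ)
    (hg12 : ∀ j l, 0 ≤ g12 j l ∧ g12 j l ≤ 1)
    (hg21 : ∀ l j, 0 ≤ g21 l j ∧ g21 l j ≤ 1)
    (hg12row : ∀ j, ∑ l, g12 j l = 1) (hg21row : ∀ l, ∑ j, g21 l j = 1)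
    -- stagewise local levels, as functions of the data:
    (A1 : Fin m1 → ℕ → Ω → ℝ) (A2 : Fin m2 → ℕ → Ω → ℝ)
    (hA1one : ∀ j ω, A1 j 1 ω = a1 j)
    (hA2 : ∀ k, 1 ≤ k → ∀ l ω, A2 l k ω = a2 l
      + ∑ j, (((Finset.univ.filter fun s => p1 j s ω ≤ A1 j k ω / n1 j).card : ℝ)
          / n1 j) * g12 j l * A1 j k ω)
    (hA1 : ∀ k, 2 ≤ k → ∀ j ω, A1 j k ω = a1 j
      + ∑ l, (((Finset.univ.filter fun s =>
            p2 l s ω ≤ A2 l (k - 1) ω / n2 l).card : ℝ) / n2 l)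
          * g21 l j * a2 l) :
    μ {ω | ∃ k, 1 ≤ k ∧
        ((∃ j, ∃ s ∈ T1 j, p1 j s ω ≤ A1 j k ω / n1 j)
          ∨ (∃ l, ∃ s ∈ T2 l, p2 l s ω ≤ A2 l k ω / n2 l))}
      ≤ ENNReal.ofReal α := by
  have hg12' : ∀ j l, 0 ≤ g12 j l := fun j l => (hg12 j l).1
  have hg21' : ∀ l j, 0 ≤ g21 l j := fun l j => (hg21 l j).1
  set b1 := transferLevel a1 (fun l => nonNullFraction (T2 l)) g21 a2
  set b2 := transferLevel a2 (fun j => nonNullFraction (T1 j)) g12 b1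
  have hb1 : ∀ j, 0 ≤ b1 j := worstLevel₁_nonneg ha1 ha2 hg21'
  have hb2 : ∀ l, 0 ≤ b2 l :=
    transferLevel_nonneg ha2 (fun _ => nonNullFraction_nonneg _) hg12' hb1
  calc μ _ ≤ μ ((⋃ j, ⋃ s ∈ T1 j, {ω | p1 j s ω ≤ b1 j / n1 j})
        ∪ ⋃ l, ⋃ s ∈ T2 l, {ω | p2 l s ω ≤ b2 l / n2 l}) := measure_mono fun ω hω => by
        have hlev : IsRetestingLevels (p1 · · ω) (p2 · · ω) a1 a2 g12 g21 (A1 · · ω) (A2 · · ω) :=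
          ⟨(hA1one · ω), fun k hk l => hA2 k hk l ω, fun k hk j => hA1 k hk j ω⟩
        simpa only [Set.mem_union, Set.mem_iUnion, Set.mem_ofPred_eq, exists_prop]
          using exists_le_worstLevel_of_rejected hlev ha1 ha2 hg12' hg21' hω
    _ ≤ ENNReal.ofReal (∑ j, nullFraction (T1 j) * b1 j)
          + ENNReal.ofReal (∑ l, nullFraction (T2 l) * b2 l) :=
        (measure_union_le _ _).trans (add_le_add
          (measure_iUnion_biUnion_le_of_superuniform hsuper1 hb1)
          (measure_iUnion_biUnion_le_of_superuniform hsuper2 hb2))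
    _ = ENNReal.ofReal (∑ j, nullFraction (T1 j) * b1 j + ∑ l, nullFraction (T2 l) * b2 l) :=
        (ENNReal.ofReal_add (sum_nonneg fun j _ => mul_nonneg (nullFraction_nonneg _) (hb1 j))
          (sum_nonneg fun l _ => mul_nonneg (nullFraction_nonneg _) (hb2 l))).symm
    _ ≤ ENNReal.ofReal α := ENNReal.ofReal_le_ofReal <|
        (sum_nullFraction_mul_worstLevels_le ha1 ha2 hg12' hg21' (fun j => (hg12row j).le)
          (fun l => (hg21row l).le)).trans_eq hα

/-- Theorem 2: the two-layer Bonferroni-based gatekeeping procedure with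
retesting (Algorithm 3) strongly controls the global FWER at level `α` under
arbitrary dependence. -/
theorem two_layer_retesting_FWER_control
    {Ω : Type*} [MeasurableSpace Ω] (μ : Measure Ω) [IsProbabilityMeasure μ]
    (m1 m2 : ℕ) (hm1 : 0 < m1) (hm2 : 0 < m2)
    (n1 : Fin m1 → ℕ) (n2 : Fin m2 → ℕ)
    (hn1 : ∀ j, 0 < n1 j) (hn2 : ∀ l, 0 < n2 l)
    (p1 : (j : Fin m1) → Fin (n1 j) → Ω → ℝ)
    (p2 : (l : Fin m2) → Fin (n2 l) → Ω → ℝ)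
    (hmeas1 : ∀ j s, Measurable (p1 j s)) (hmeas2 : ∀ l s, Measurable (p2 l s))
    (T1 : (j : Fin m1) → Finset (Fin (n1 j)))
    (T2 : (l : Fin m2) → Finset (Fin (n2 l)))
    (hsuper1 : ∀ j, ∀ s ∈ T1 j, ∀ u ∈ Set.Icc (0 : ℝ) 1,
      μ {ω | p1 j s ω ≤ u} ≤ ENNReal.ofReal u)
    (hsuper2 : ∀ l, ∀ s ∈ T2 l, ∀ u ∈ Set.Icc (0 : ℝ) 1,
      μ {ω | p2 l s ω ≤ u} ≤ ENNReal.ofReal u)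
    (a1 : Fin m1 → ℝ) (a2 : Fin m2 → ℝ) (α : ℝ)
    (ha1 : ∀ j, 0 ≤ a1 j) (ha2 : ∀ l, 0 ≤ a2 l)
    (hα : (∑ j, a1 j) + ∑ l, a2 l = α)
    (g12 : Fin m1 → Fin m2 → ℝ) (g21 : Fin m2 → Fin m1 → ℝ)
    (hg12 : ∀ j l, 0 ≤ g12 j l ∧ g12 j l ≤ 1)
    (hg21 : ∀ l j, 0 ≤ g21 l j ∧ g21 l j ≤ 1)
    (hg12row : ∀ j, ∑ l, g12 j l = 1) (hg21row : ∀ l, ∑ j, g21 l j = 1)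
    -- stagewise local levels, as functions of the data:
    (A1 : Fin m1 → ℕ → Ω → ℝ) (A2 : Fin m2 → ℕ → Ω → ℝ)
    (hA1one : ∀ j ω, A1 j 1 ω = a1 j)
    (hA2 : ∀ k, 1 ≤ k → ∀ l ω, A2 l k ω = a2 l
      + ∑ j, (((Finset.univ.filter fun s => p1 j s ω ≤ A1 j k ω / n1 j).card : ℝ)
          / n1 j) * g12 j l * A1 j k ω)
    (hA1 : ∀ k, 2 ≤ k → ∀ j ω, A1 j k ω = a1 j
      + ∑ l, (((Finset.univ.filter fun s =>
            p2 l s ω ≤ A2 l (k - 1) ω / n2 l).card : ℝ) / n2 l)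
          * g21 l j * a2 l)
    -- rejection sets are nested across stages:
    (hnest1 : ∀ j ω s k k', 1 ≤ k → k ≤ k' →
      p1 j s ω ≤ A1 j k ω / n1 j → p1 j s ω ≤ A1 j k' ω / n1 j)
    (hnest2 : ∀ l ω s k k', 1 ≤ k → k ≤ k' →
      p2 l s ω ≤ A2 l k ω / n2 l → p2 l s ω ≤ A2 l k' ω / n2 l) :
    μ {ω | ∃ k, 1 ≤ k ∧
        ((∃ j, ∃ s ∈ T1 j, p1 j s ω ≤ A1 j k ω / n1 j)
          ∨ (∃ l, ∃ s ∈ T2 l, p2 l s ω ≤ A2 l k ω / n2 l))}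
      ≤ ENNReal.ofReal α :=
  two_layer_retesting_FWER_control_general μ m1 m2 n1 n2 p1 p2 T1 T2 hsuper1 hsuper2 a1 a2 α ha1 ha2
    hα g12 g21 hg12 hg21 hg12row hg21row A1 A2 hA1one hA2 hA1
end

section
/- The Bonferroni-based gatekeeping procedure with retesting of Algorithm 2 strongly controls the global FWER at level α under arbitrary dependence: given m ≥ 2 families F_i of sizes n_i with superuniform true-null p-values, initial levels α_i ≥ 0 summing to α, and a transition matrix G with entries in [0,1], zero diagonal and unit row sums, if at each stage k each family F_i is tested by the Bonferroni procedure at the updated level α_{i(k)} (per the update rule) and rejection sets are nested across stages, then for every configuration of true nulls, Pr(some true null is rejected at some stage) ≤ α. -/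
/-! Fix an outcome in which some true null is rejected, and take the first stage `k` and, within
it, the first family `i₀` where this happens. Every rejection in a family `j < i₀` at stage `k`,
and every rejection at stage `k - 1`, is then of a false null, so each rejected fraction
`|R_j| / n_j` is at most the false-null fraction `f_j = #(T_j)ᶜ / n_j`. Hence the levels of the
families `i ≤ i₀` at stage `k` are bounded by the deterministic levels `B_i` solving the same
recursion with `|R_j| / n_j` replaced by `f_j`, and the rejected true null of `F_{i₀}` has
p-value at most `B_{i₀} / n_{i₀}`. The union bound and superuniformity bound the FWER by
`∑ (1 - f_i) B_i`, and this is at most `∑ α_i = α` because a family `j` passes on the weight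
`f_j B_j` along a row of `G`, which sums to at most one. -/

open MeasureTheory Finset

theorem nonneg_of_eq_add_sum_lt {m : ℕ} {L c : Fin m → ℝ} {w : Fin m → Fin m → ℝ}
    (hc : ∀ i, 0 ≤ c i) (hw : ∀ i j, 0 ≤ w i j)
    (hL : ∀ i, L i = c i + ∑ j ∈ univ.filter (· < i), w j i * L j) (i : Fin m) : 0 ≤ L i := by
  induction i using WellFoundedLT.induction with
  | _ i ih =>
    rw [hL]
    exact add_nonneg (hc i) (sum_nonneg fun j hj => mul_nonneg (hw j i) (ih j (mem_filter.mp hj).2))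

theorem sum_lt_add_sum_gt_le_sum {m : ℕ} {x : Fin m → ℝ} {g : Fin m → Fin m → ℝ}
    (hx : ∀ j, 0 ≤ x j) (hg : ∀ i j, 0 ≤ g i j) (hrow : ∀ j, ∑ i, g j i ≤ 1) :
    ∑ i, (∑ j ∈ univ.filter (· < i), x j * g j i + ∑ j ∈ univ.filter (i < ·), x j * g j i)
      ≤ ∑ j, x j :=
  calc ∑ i, (∑ j ∈ univ.filter (· < i), x j * g j i + ∑ j ∈ univ.filter (i < ·), x j * g j i)
      ≤ ∑ i, ∑ j, x j * g j i := by
        refine sum_le_sum fun i _ => ?_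
        rw [sum_filter, sum_filter, ← sum_add_distrib]
        refine sum_le_sum fun j _ => ?_
        have hxg := mul_nonneg (hx j) (hg j i)
        split_ifs with h₁ h₂ <;> first | exact absurd h₂ h₁.not_gt | linarith
    _ = ∑ j, x j * ∑ i, g j i := by rw [sum_comm]; simp only [mul_sum]
    _ ≤ ∑ j, x j := sum_le_sum fun j _ => mul_le_of_le_one_right (hx j) (hrow j)

/-- The level `α_{i(k)}` of Algorithm 2 when each family `j < i` rejects the fraction `f j` of its
hypotheses at stage `k` and each family `l > i` rejects the fraction `f l` at stage `k - 1`. -/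
noncomputable def worstCaseLevel {m : ℕ} (f a : Fin m → ℝ) (g : Fin m → Fin m → ℝ) :
    Fin m → ℝ
  | i => a i
      + (∑ j ∈ (univ.filter (· < i)).attach, f j.1 * g j.1 i * worstCaseLevel f a g j.1)
      + ∑ l ∈ univ.filter (i < ·), f l * g l i * a l
termination_by i => i
decreasing_by exact (mem_filter.mp j.2).2

section worstCaseLevel

variable {m : ℕ} {f a : Fin m → ℝ} {g : Fin m → Fin m → ℝ}

theorem worstCaseLevel_eq (f a : Fin m → ℝ) (g : Fin m → Fin m → ℝ) (i : Fin m) :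
    worstCaseLevel f a g i = a i
      + (∑ j ∈ univ.filter (· < i), f j * g j i * worstCaseLevel f a g j)
      + ∑ l ∈ univ.filter (i < ·), f l * g l i * a l := by
  rw [worstCaseLevel,
    sum_attach (univ.filter (· < i)) (fun j => f j * g j i * worstCaseLevel f a g j)]

theorem le_worstCaseLevel_of_le (hf : ∀ i, 0 ≤ f i) (hg : ∀ i j, 0 ≤ g i j) {L r : Fin m → ℝ}
    (i₀ : Fin m) (hL0 : ∀ j < i₀, 0 ≤ L j) (hr : ∀ j < i₀, r j ≤ f j)
    (hL : ∀ i ≤ i₀, L i ≤ a i + ∑ j ∈ univ.filter (· < i), r j * g j i * L j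
      + ∑ l ∈ univ.filter (i < ·), f l * g l i * a l) :
    ∀ i ≤ i₀, L i ≤ worstCaseLevel f a g i := by
  intro i
  induction i using WellFoundedLT.induction with
  | _ i ih =>
    intro hi
    have hsum : ∑ j ∈ univ.filter (· < i), r j * g j i * L j
        ≤ ∑ j ∈ univ.filter (· < i), f j * g j i * worstCaseLevel f a g j := by
      refine sum_le_sum fun j hj => ?_
      have hji : j < i := (mem_filter.mp hj).2
      have hji₀ : j < i₀ := hji.trans_le hi
      exact mul_le_mul (mul_le_mul_of_nonneg_right (hr j hji₀) (hg j i))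
        (ih j hji hji₀.le) (hL0 j hji₀) (mul_nonneg (hf j) (hg j i))
    rw [worstCaseLevel_eq]
    linarith [hL i hi]

theorem worstCaseLevel_nonneg (hf : ∀ i, 0 ≤ f i) (ha : ∀ i, 0 ≤ a i) (hg : ∀ i j, 0 ≤ g i j)
    (i : Fin m) : 0 ≤ worstCaseLevel f a g i := by
  refine nonneg_of_eq_add_sum_lt
    (c := fun i => a i + ∑ l ∈ univ.filter (i < ·), f l * g l i * a l) (fun i => ?_)
    (fun j i => mul_nonneg (hf j) (hg j i)) (fun i => ?_) i
  · exact add_nonneg (ha i) (sum_nonneg fun l _ => mul_nonneg (mul_nonneg (hf l) (hg l i)) (ha l))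
  · rw [worstCaseLevel_eq, add_right_comm]

theorem le_worstCaseLevel_self (hf : ∀ i, 0 ≤ f i) (ha : ∀ i, 0 ≤ a i) (hg : ∀ i j, 0 ≤ g i j)
    (i : Fin m) : a i ≤ worstCaseLevel f a g i := by
  rw [worstCaseLevel_eq, add_assoc]
  refine le_add_of_nonneg_right (add_nonneg (sum_nonneg fun j _ => ?_) (sum_nonneg fun l _ => ?_))
  · exact mul_nonneg (mul_nonneg (hf j) (hg j i)) (worstCaseLevel_nonneg hf ha hg j)
  · exact mul_nonneg (mul_nonneg (hf l) (hg l i)) (ha l)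

theorem sum_one_sub_mul_worstCaseLevel_le (hf : ∀ i, 0 ≤ f i) (ha : ∀ i, 0 ≤ a i)
    (hg : ∀ i j, 0 ≤ g i j) (hrow : ∀ i, ∑ j, g i j ≤ 1) :
    ∑ i, (1 - f i) * worstCaseLevel f a g i ≤ ∑ i, a i := by
  set B := worstCaseLevel f a g
  have hstep : ∀ i, B i ≤ a i + (∑ j ∈ univ.filter (· < i), f j * B j * g j i
      + ∑ j ∈ univ.filter (i < ·), f j * B j * g j i) := by
    intro i
    have hlt : ∑ j ∈ univ.filter (· < i), f j * g j i * B j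
        = ∑ j ∈ univ.filter (· < i), f j * B j * g j i :=
      sum_congr rfl fun j _ => mul_right_comm _ _ _
    have hgt : ∑ l ∈ univ.filter (i < ·), f l * g l i * a l
        ≤ ∑ l ∈ univ.filter (i < ·), f l * B l * g l i := by
      refine sum_le_sum fun l _ => ?_
      rw [mul_right_comm]
      exact mul_le_mul_of_nonneg_right
        (mul_le_mul_of_nonneg_left (le_worstCaseLevel_self hf ha hg l) (hf l)) (hg l i)
    linarith [worstCaseLevel_eq f a g i]
  have hoff := sum_lt_add_sum_gt_le_sum
    (fun j => mul_nonneg (hf j) (worstCaseLevel_nonneg hf ha hg j)) hg hrow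
  have hB : ∑ i, B i ≤ ∑ i, a i + ∑ i, f i * B i :=
    (sum_le_sum fun i _ => hstep i).trans (by rw [sum_add_distrib]; linarith)
  have hsplit : ∑ i, (1 - f i) * B i = ∑ i, B i - ∑ i, f i * B i := by
    rw [← sum_sub_distrib]
    exact sum_congr rfl fun i _ => by ring
  linarith

end worstCaseLevel

theorem card_div_le_one_sub_card_compl_div {N : ℕ} (T : Finset (Fin N)) :
    (#T : ℝ) / N ≤ 1 - (#Tᶜ : ℝ) / N := by
  rw [le_sub_iff_add_le, ← add_div, ← Nat.cast_add, card_add_card_compl, Fintype.card_fin]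
  exact div_self_le_one _

noncomputable def rejectedFraction {N : ℕ} (q : Fin N → ℝ) (c : ℝ) : ℝ :=
  (#(univ.filter fun s => q s ≤ c / N) : ℝ) / N

theorem rejectedFraction_nonneg {N : ℕ} (q : Fin N → ℝ) (c : ℝ) : 0 ≤ rejectedFraction q c := by
  unfold rejectedFraction
  positivity

theorem rejectedFraction_le_of_forall_not_le {N : ℕ} {q : Fin N → ℝ} {c : ℝ} {T : Finset (Fin N)}
    (h : ∀ s ∈ T, ¬ q s ≤ c / N) : rejectedFraction q c ≤ (#Tᶜ : ℝ) / N := by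
  have hsub : univ.filter (fun s => q s ≤ c / N) ⊆ Tᶜ := fun s hs =>
    mem_compl.mpr fun hsT => h s hsT (mem_filter.mp hs).2
  exact div_le_div_of_nonneg_right (by exact_mod_cast card_le_card hsub) (Nat.cast_nonneg _)

/-- The update rule of Algorithm 2: `L i k` is the level `α_{i(k)}` of family `i` at stage `k`. -/
structure IsRetestingLevels_s18 {m : ℕ} {n : Fin m → ℕ} (q : (i : Fin m) → Fin (n i) → ℝ)
    (a : Fin m → ℝ) (g : Fin m → Fin m → ℝ) (L : Fin m → ℕ → ℝ) : Prop where
  one : ∀ i, L i 1 = a i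
    + ∑ j ∈ univ.filter (· < i), rejectedFraction (q j) (L j 1) * g j i * L j 1
  succ : ∀ k, 2 ≤ k → ∀ i, L i k = a i
    + (∑ j ∈ univ.filter (· < i), rejectedFraction (q j) (L j k) * g j i * L j k)
    + ∑ l ∈ univ.filter (i < ·), rejectedFraction (q l) (L l (k - 1)) * g l i * a l

namespace IsRetestingLevels_s18

variable {m : ℕ} {n : Fin m → ℕ} {q : (i : Fin m) → Fin (n i) → ℝ} {a : Fin m → ℝ}
  {g : Fin m → Fin m → ℝ} {L : Fin m → ℕ → ℝ}

theorem nonneg (h : IsRetestingLevels_s18 q a g L) (ha : ∀ i, 0 ≤ a i) (hg : ∀ i j, 0 ≤ g i j)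
    {k : ℕ} (hk : 1 ≤ k) (i : Fin m) : 0 ≤ L i k := by
  have hw : ∀ k j i, 0 ≤ rejectedFraction (q j) (L j k) * g j i := fun k j i =>
    mul_nonneg (rejectedFraction_nonneg _ _) (hg j i)
  rcases hk.eq_or_lt with rfl | hk
  · exact nonneg_of_eq_add_sum_lt ha (hw 1) h.one i
  · refine nonneg_of_eq_add_sum_lt (L := (L · k))
      (fun i => add_nonneg (ha i) (sum_nonneg fun l _ => ?_)) (hw k)
      (fun i => by rw [h.succ k hk, add_right_comm]) i
    exact mul_nonneg (hw (k - 1) l i) (ha l)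

theorem le_worstCaseLevel (h : IsRetestingLevels_s18 q a g L) (ha : ∀ i, 0 ≤ a i)
    (hg : ∀ i j, 0 ≤ g i j) {T : (i : Fin m) → Finset (Fin (n i))} {k : ℕ} (hk : 1 ≤ k)
    {i₀ : Fin m} (hprev : 2 ≤ k → ∀ l, ∀ s ∈ T l, ¬ q l s ≤ L l (k - 1) / n l)
    (hbefore : ∀ j < i₀, ∀ s ∈ T j, ¬ q j s ≤ L j k / n j) :
    ∀ i ≤ i₀, L i k ≤ worstCaseLevel (fun i => (#(T i)ᶜ : ℝ) / n i) a g i := by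
  refine le_worstCaseLevel_of_le (fun i => by positivity) hg i₀
    (fun j _ => h.nonneg ha hg hk j) (fun j hj => rejectedFraction_le_of_forall_not_le
    (hbefore j hj)) fun i _ => ?_
  rcases hk.eq_or_lt with rfl | hk
  · rw [h.one]
    refine le_add_of_nonneg_right (sum_nonneg fun l _ => ?_)
    exact mul_nonneg (mul_nonneg (by positivity) (hg l i)) (ha l)
  · rw [h.succ k hk]
    refine (add_le_add_iff_left _).mpr (sum_le_sum fun l _ => ?_)
    exact mul_le_mul_of_nonneg_right (mul_le_mul_of_nonneg_right
      (rejectedFraction_le_of_forall_not_le (hprev hk l)) (hg l i)) (ha l)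

theorem exists_mem_le_worstCaseLevel (h : IsRetestingLevels_s18 q a g L) (ha : ∀ i, 0 ≤ a i)
    (hg : ∀ i j, 0 ≤ g i j) {T : (i : Fin m) → Finset (Fin (n i))}
    (hrej : ∃ k, 1 ≤ k ∧ ∃ i, ∃ s ∈ T i, q i s ≤ L i k / n i) :
    ∃ i, ∃ s ∈ T i, q i s ≤ worstCaseLevel (fun i => (#(T i)ᶜ : ℝ) / n i) a g i / n i := by
  classical
  obtain ⟨hk, hfirst⟩ := Nat.find_spec hrej
  have hprev : 2 ≤ Nat.find hrej → ∀ l, ∀ s ∈ T l, ¬ q l s ≤ L l (Nat.find hrej - 1) / n l :=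
    fun hk₂ l s hs hls => Nat.find_min hrej (by omega) ⟨by omega, l, s, hs, hls⟩
  obtain ⟨i₀, ⟨s₀, hs₀, hrej₀⟩, hmin⟩ := wellFounded_lt.has_min _ hfirst
  refine ⟨i₀, s₀, hs₀, hrej₀.trans (div_le_div_of_nonneg_right ?_ (Nat.cast_nonneg _))⟩
  exact h.le_worstCaseLevel ha hg hk hprev (fun j hj s hs hjs => hmin j ⟨s, hs, hjs⟩ hj) i₀ le_rfl

end IsRetestingLevels_s18

theorem measure_le_le_ofReal_of_superuniform {Ω : Type*} [MeasurableSpace Ω] {μ : Measure Ω}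
    [IsProbabilityMeasure μ] {X : Ω → ℝ}
    (hX : ∀ u ∈ Set.Icc (0 : ℝ) 1, μ {ω | X ω ≤ u} ≤ ENNReal.ofReal u) (u : ℝ) :
    μ {ω | X ω ≤ u} ≤ ENNReal.ofReal u := by
  rcases lt_or_ge u 0 with hu | hu
  · calc μ {ω | X ω ≤ u} ≤ μ {ω | X ω ≤ 0} :=
          measure_mono fun ω (hω : X ω ≤ u) => hω.trans hu.le
      _ ≤ ENNReal.ofReal 0 := hX 0 ⟨le_rfl, zero_le_one⟩
      _ = ENNReal.ofReal u := by rw [ENNReal.ofReal_zero, ENNReal.ofReal_of_nonpos hu.le]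
  rcases le_or_gt u 1 with hu₁ | hu₁
  · exact hX u ⟨hu, hu₁⟩
  · calc μ {ω | X ω ≤ u} ≤ 1 := prob_le_one
      _ ≤ ENNReal.ofReal u := by rw [← ENNReal.ofReal_one]; exact ENNReal.ofReal_le_ofReal hu₁.le

theorem algorithm2_retesting_FWER_control_general
    {Ω : Type*} [MeasurableSpace Ω] (μ : Measure Ω) [IsProbabilityMeasure μ]
    (m : ℕ)
    (n : Fin m → ℕ)
    (p : (i : Fin m) → Fin (n i) → Ω → ℝ)
    (T : (i : Fin m) → Finset (Fin (n i)))
    (hsuper : ∀ i, ∀ s ∈ T i, ∀ u ∈ Set.Icc (0 : ℝ) 1,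
      μ {ω | p i s ω ≤ u} ≤ ENNReal.ofReal u)
    (a : Fin m → ℝ) (α : ℝ) (ha : ∀ i, 0 ≤ a i) (hα : ∑ i, a i = α)
    (g : Fin m → Fin m → ℝ)
    (hg0 : ∀ i j, 0 ≤ g i j)
    (hgrow : ∀ i, ∑ j, g i j = 1)
    -- stagewise local levels, as functions of the data:
    (A : Fin m → ℕ → Ω → ℝ)
    (hAone : ∀ i ω, A i 1 ω = a i
      + ∑ j ∈ Finset.univ.filter (fun j => j < i),
          (((Finset.univ.filter fun s => p j s ω ≤ A j 1 ω / n j).card : ℝ)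
            / n j) * g j i * A j 1 ω)
    (hAk : ∀ k, 2 ≤ k → ∀ i ω, A i k ω = a i
      + (∑ j ∈ Finset.univ.filter (fun j => j < i),
          (((Finset.univ.filter fun s => p j s ω ≤ A j k ω / n j).card : ℝ)
            / n j) * g j i * A j k ω)
      + ∑ l ∈ Finset.univ.filter (fun l => i < l),
          (((Finset.univ.filter fun s =>
              p l s ω ≤ A l (k - 1) ω / n l).card : ℝ) / n l) * g l i * a l) :
    μ {ω | ∃ k, 1 ≤ k ∧ ∃ i, ∃ s ∈ T i, p i s ω ≤ A i k ω / n i}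
      ≤ ENNReal.ofReal α := by
  set f : Fin m → ℝ := fun i => (#(T i)ᶜ : ℝ) / n i
  set B := worstCaseLevel f a g
  have hf : ∀ i, 0 ≤ f i := fun i => by positivity
  have hB : ∀ i, 0 ≤ B i := worstCaseLevel_nonneg hf ha hg0
  have hcover : {ω | ∃ k, 1 ≤ k ∧ ∃ i, ∃ s ∈ T i, p i s ω ≤ A i k ω / n i}
      ⊆ ⋃ i, ⋃ s ∈ T i, {ω | p i s ω ≤ B i / n i} := fun ω hω => by
    simp only [Set.mem_iUnion, Set.mem_ofPred_eq, exists_prop]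
    exact IsRetestingLevels_s18.exists_mem_le_worstCaseLevel (q := fun i s => p i s ω)
      ⟨fun i => hAone i ω, fun k hk i => hAk k hk i ω⟩ ha hg0 hω
  calc μ {ω | ∃ k, 1 ≤ k ∧ ∃ i, ∃ s ∈ T i, p i s ω ≤ A i k ω / n i}
      ≤ ∑ i, ∑ s ∈ T i, μ {ω | p i s ω ≤ B i / n i} :=
        (measure_mono hcover).trans <| (measure_iUnion_fintype_le μ _).trans <|
          sum_le_sum fun i _ => measure_biUnion_finset_le _ _
    _ ≤ ∑ i, ∑ s ∈ T i, ENNReal.ofReal (B i / n i) := by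
        gcongr with i _ s hs
        exact measure_le_le_ofReal_of_superuniform (hsuper i s hs) _
    _ = ENNReal.ofReal (∑ i, #(T i) * (B i / n i)) := by
        rw [ENNReal.ofReal_sum_of_nonneg fun i _ =>
          mul_nonneg (Nat.cast_nonneg _) (div_nonneg (hB i) (Nat.cast_nonneg _))]
        simp only [sum_const, nsmul_eq_mul, ENNReal.ofReal_mul (Nat.cast_nonneg _),
          ENNReal.ofReal_natCast]
    _ ≤ ENNReal.ofReal (∑ i, (1 - f i) * B i) := by
        refine ENNReal.ofReal_le_ofReal (sum_le_sum fun i _ => ?_)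
        rw [← mul_comm_div]
        exact mul_le_mul_of_nonneg_right (card_div_le_one_sub_card_compl_div (T i)) (hB i)
    _ ≤ ENNReal.ofReal α := ENNReal.ofReal_le_ofReal <|
        hα ▸ sum_one_sub_mul_worstCaseLevel_le hf ha hg0 fun i => (hgrow i).le

/-- Theorem 1: the Bonferroni-based gatekeeping procedure with retesting
(Algorithm 2) strongly controls the global FWER at level `α` under arbitrary
dependence. -/
theorem algorithm2_retesting_FWER_control
    {Ω : Type*} [MeasurableSpace Ω] (μ : Measure Ω) [IsProbabilityMeasure μ]
    (m : ℕ) (hm : 2 ≤ m)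
    (n : Fin m → ℕ) (hn : ∀ i, 0 < n i)
    (p : (i : Fin m) → Fin (n i) → Ω → ℝ)
    (hmeas : ∀ i s, Measurable (p i s))
    (T : (i : Fin m) → Finset (Fin (n i)))
    (hsuper : ∀ i, ∀ s ∈ T i, ∀ u ∈ Set.Icc (0 : ℝ) 1,
      μ {ω | p i s ω ≤ u} ≤ ENNReal.ofReal u)
    (a : Fin m → ℝ) (α : ℝ) (ha : ∀ i, 0 ≤ a i) (hα : ∑ i, a i = α)
    (g : Fin m → Fin m → ℝ)
    (hg0 : ∀ i j, 0 ≤ g i j) (hg1 : ∀ i j, g i j ≤ 1)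
    (hgdiag : ∀ i, g i i = 0) (hgrow : ∀ i, ∑ j, g i j = 1)
    -- stagewise local levels, as functions of the data:
    (A : Fin m → ℕ → Ω → ℝ)
    (hAone : ∀ i ω, A i 1 ω = a i
      + ∑ j ∈ Finset.univ.filter (fun j => j < i),
          (((Finset.univ.filter fun s => p j s ω ≤ A j 1 ω / n j).card : ℝ)
            / n j) * g j i * A j 1 ω)
    (hAk : ∀ k, 2 ≤ k → ∀ i ω, A i k ω = a i
      + (∑ j ∈ Finset.univ.filter (fun j => j < i),
          (((Finset.univ.filter fun s => p j s ω ≤ A j k ω / n j).card : ℝ)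
            / n j) * g j i * A j k ω)
      + ∑ l ∈ Finset.univ.filter (fun l => i < l),
          (((Finset.univ.filter fun s =>
              p l s ω ≤ A l (k - 1) ω / n l).card : ℝ) / n l) * g l i * a l)
    -- rejection sets are nested across stages:
    (hnest : ∀ i ω s k k', 1 ≤ k → k ≤ k' →
      p i s ω ≤ A i k ω / n i → p i s ω ≤ A i k' ω / n i) :
    μ {ω | ∃ k, 1 ≤ k ∧ ∃ i, ∃ s ∈ T i, p i s ω ≤ A i k ω / n i}
      ≤ ENNReal.ofReal α :=
  algorithm2_retesting_FWER_control_general μ m n p T hsuper a α ha hα g hg0 hgrow A hAone hAk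
end
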